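/- arXiv:1809.05130 — 8 statements merged into one kernel-verified Lean document; each statement's English description precedes it below -/
import Mathlib

section
/- Let τ be a face of a polyhedral cone σ in N. Then for every w ∈ τ∨ there exist u, v ∈ σ∨ with v ∈ τ⊥ such that w = u − v. -/
def IsPolyhedralCone {N : Type*} [AddCommGroup N] [Module ℝ N] (σ : Set N) : Prop :=
  ∃ S : Finset N, σ = {x | ∃ c : N → ℝ, (∀ v, 0 ≤ c v) ∧ x = ∑ v ∈ S, c v • v}

def dualCone {N : Type*} [AddCommGroup N] [Module ℝ N] (σ : Set N) :
    Set (Module.Dual ℝ N) := {u | ∀ v ∈ σ, 0 ≤ u v}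

def IsFaceOf {N : Type*} [AddCommGroup N] [Module ℝ N] (τ σ : Set N) : Prop :=
  ∃ m ∈ dualCone σ, τ = {v | m v = 0} ∩ σ

/-- The annihilator `τ⊥` of a subset `τ ⊆ N`, inside the dual space. -/
def perp {N : Type*} [AddCommGroup N] [Module ℝ N] (τ : Set N) :
    Set (Module.Dual ℝ N) := {u | ∀ x ∈ τ, u x = 0}

/-- If `τ` is a face of a polyhedral cone `σ`, then every `w ∈ τ∨` can be written as
`w = u - v` with `u, v ∈ σ∨` and `v ∈ τ⊥`. -/
theorem dual_of_face_decomposition {N : Type*} [AddCommGroup N] [Module ℝ N]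
    [FiniteDimensional ℝ N] (σ τ : Set N) (hσ : IsPolyhedralCone σ)
    (hτ : IsFaceOf τ σ) (w : Module.Dual ℝ N) (hw : w ∈ dualCone τ) :
    ∃ u ∈ dualCone σ, ∃ v ∈ dualCone σ, v ∈ perp τ ∧ w = u - v := by
  classical
  obtain ⟨S, hS⟩ := hσ
  obtain ⟨m, hm, hτeq⟩ := hτ
  have hSσ : ∀ s ∈ S, s ∈ σ := by
    intro s hs
    rw [hS]
    refine ⟨fun u => if u = s then 1 else 0, fun v => by dsimp only; split <;> norm_num, ?_⟩
    simp [hs]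
  set g : N → ℝ := fun s => if 0 < m s then max (-(w s) / (m s)) 0 else 0 with hg
  have hgnn : ∀ s, 0 ≤ g s := by
    intro s
    simp only [hg]
    split
    · exact le_max_right _ _
    · exact le_refl 0
  set l : ℝ := ∑ s ∈ S, g s with hl
  have hl0 : 0 ≤ l := Finset.sum_nonneg fun s _ => hgnn s
  have hkey : ∀ s ∈ S, 0 ≤ w s + l * m s := by
    intro s hs
    have hms : 0 ≤ m s := hm s (hSσ s hs)
    rcases hms.eq_or_lt with h | h
    · have hsτ : s ∈ τ := by
        rw [hτeq]; exact ⟨h.symm, hSσ s hs⟩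
      have := hw s hsτ
      rw [← h]; linarith
    · have hlg : g s ≤ l := Finset.single_le_sum (fun s _ => hgnn s) hs
      have : -(w s) / (m s) ≤ l := le_trans (by simp [hg, h]) hlg
      have := (div_le_iff₀ h).mp this
      linarith
  have key : ∀ x ∈ σ, 0 ≤ w x + l * m x := by
    intro x hx
    rw [hS] at hx
    obtain ⟨c, hc, rfl⟩ := hx
    rw [map_sum, map_sum, Finset.mul_sum, ← Finset.sum_add_distrib]
    apply Finset.sum_nonneg
    intro s hs
    rw [map_smul, map_smul]
    simp only [smul_eq_mul]
    nlinarith [mul_nonneg (hc s) (hkey s hs)]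
  refine ⟨w + l • m, ?_, l • m, ?_, ?_, (add_sub_cancel_right w (l • m)).symm⟩
  · intro x hx
    simpa [smul_eq_mul] using key x hx
  · intro x hx
    simpa [smul_eq_mul] using mul_nonneg hl0 (hm x hx)
  · intro x hx
    have : m x = 0 := by
      rw [hτeq] at hx; exact hx.1
    simp [this]
end

section
/- Separation Lemma: if polyhedral cones σ and σ' in N meet in a common face τ = σ ∩ σ', then there exists m ∈ σ∨ ∩ (−σ')∨ with τ = H_m ∩ σ = H_m ∩ σ'. -/
section

open Pointwise

theorem Submodule.FG.neg {R M : Type*} [Semiring R] [AddCommGroup M] [Module R M]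
    {p : Submodule R M} (hp : p.FG) : (-p).FG := by
  classical
  obtain ⟨S, rfl⟩ := hp
  exact ⟨-S, by rw [Finset.coe_neg, span_neg_eq_neg]⟩

theorem Submodule.mem_sup_neg_comm {R M : Type*} [Semiring R] [AddCommGroup M] [Module R M]
    {p q : Submodule R M} {w : M} : w ∈ p ⊔ -q ↔ -w ∈ q ⊔ -p := by
  rw [← mem_neg, neg_sup, neg_neg, sup_comm]

namespace PointedCone

section Caratheodory

variable {E : Type*} [AddCommGroup E] [Module ℝ E]

theorem sum_smul_mem_hull {S : Finset E} {c : E → ℝ} (hc : ∀ v ∈ S, 0 ≤ c v) :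
    ∑ v ∈ S, c v • v ∈ hull ℝ (S : Set E) :=
  sum_mem fun v hv => (hull ℝ _).smul_mem (hc v hv) (subset_hull hv)

theorem mem_hull_finset_iff {S : Finset E} {x : E} :
    x ∈ hull ℝ (S : Set E) ↔ ∃ c : E → ℝ, (∀ v, 0 ≤ c v) ∧ x = ∑ v ∈ S, c v • v := by
  refine ⟨fun hx => ?_, fun ⟨c, hc, hx⟩ => hx ▸ sum_smul_mem_hull fun v _ => hc v⟩
  obtain ⟨f, -, rfl⟩ := Submodule.mem_span_finset.1 hx
  exact ⟨fun v => f v, fun v => (f v).2, rfl⟩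

theorem mem_hull_erase_of_not_linearIndepOn [DecidableEq E] {S : Finset E}
    (hS : ¬LinearIndepOn ℝ id (S : Set E)) {x : E} (hx : x ∈ hull ℝ (S : Set E)) :
    ∃ g ∈ S, x ∈ hull ℝ (S.erase g : Set E) := by
  obtain ⟨d, hd, i, hiS, hi⟩ := not_linearIndepOn_finset_iff.1 hS
  simp only [id] at hd
  wlog hdi : 0 < d i generalizing d
  · exact this (-d) (neg_ne_zero.2 hi) (by simpa using hd)
      (by simpa using lt_of_le_of_ne (not_lt.1 hdi) hi)
  obtain ⟨c, hc, rfl⟩ := mem_hull_finset_iff.1 hx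
  -- Subtract the largest multiple `t • d` of the relation that keeps all coefficients
  -- nonnegative; the coefficient of the minimizer `g` becomes zero.
  obtain ⟨g, hg, hmin⟩ := Finset.exists_min_image {v ∈ S | 0 < d v} (fun v => c v / d v)
    ⟨i, Finset.mem_filter.2 ⟨hiS, hdi⟩⟩
  rw [Finset.mem_filter] at hg
  set t := c g / d g
  have ht : 0 ≤ t := div_nonneg (hc g) hg.2.le
  have hcoef : ∀ v ∈ S, 0 ≤ c v - t * d v := by
    intro v hv
    rcases lt_or_ge 0 (d v) with hdv | hdv
    · have := (le_div_iff₀ hdv).1 (hmin v (Finset.mem_filter.2 ⟨hv, hdv⟩))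
      linarith
    · nlinarith [hc v]
  have hsum : ∑ v ∈ S.erase g, (c v - t * d v) • v = ∑ v ∈ S, c v • v := by
    rw [Finset.sum_erase _ (by simp [t, div_mul_cancel₀ _ hg.2.ne'])]
    simp only [sub_smul, mul_smul, Finset.sum_sub_distrib, ← Finset.smul_sum, hd, smul_zero,
      sub_zero]
  exact ⟨g, hg.1, hsum ▸ sum_smul_mem_hull fun v hv => hcoef v (Finset.mem_of_mem_erase hv)⟩

theorem exists_linearIndepOn_of_mem_hull (S : Finset E) {x : E} (hx : x ∈ hull ℝ (S : Set E)) :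
    ∃ T ⊆ S, LinearIndepOn ℝ id (T : Set E) ∧ x ∈ hull ℝ (T : Set E) := by
  classical
  induction S using Finset.strongInduction with
  | H S ih =>
    by_cases hS : LinearIndepOn ℝ id (S : Set E)
    · exact ⟨S, subset_rfl, hS, hx⟩
    obtain ⟨g, hg, hxg⟩ := mem_hull_erase_of_not_linearIndepOn hS hx
    obtain ⟨T, hT, hTli, hxT⟩ := ih _ (Finset.erase_ssubset hg) hxg
    exact ⟨T, hT.trans (Finset.erase_subset _ _), hTli, hxT⟩

end Caratheodory

section Topology

variable {E : Type*} [NormedAddCommGroup E] [NormedSpace ℝ E]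

theorem isClosed_hull_of_linearIndepOn {T : Finset E} (hT : LinearIndepOn ℝ id (T : Set E)) :
    IsClosed (hull ℝ (T : Set E) : Set E) := by
  set f := Fintype.linearCombination ℝ (fun i : T => (i : E))
  have hf : Topology.IsClosedEmbedding f :=
    f.isClosedEmbedding_of_injective (LinearMap.ker_eq_bot.2 hT.fintypeLinearCombination_injective)
  have himage : (hull ℝ (T : Set E) : Set E) = f '' Set.Ici 0 := by
    ext x
    simp only [SetLike.mem_coe, Submodule.mem_span_finset', Set.mem_image, Set.mem_Ici, f,
      Fintype.linearCombination_apply]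
    constructor
    · rintro ⟨c, rfl⟩
      exact ⟨fun i => c i, fun i => (c i).2, rfl⟩
    · rintro ⟨c, hc, rfl⟩
      exact ⟨fun i => ⟨c i, hc i⟩, rfl⟩
  rw [himage]
  exact hf.isClosedMap _ isClosed_Ici

theorem isClosed_hull_finset [FiniteDimensional ℝ E] (S : Finset E) :
    IsClosed (hull ℝ (S : Set E) : Set E) := by
  have hunion : (hull ℝ (S : Set E) : Set E) =
      ⋃ T ∈ {T : Finset E | T ⊆ S ∧ LinearIndepOn ℝ id (T : Set E)}, hull ℝ (T : Set E) := by
    refine subset_antisymm (fun x hx => ?_) (Set.iUnion₂_subset fun T hT => ?_)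
    · obtain ⟨T, hTS, hT, hxT⟩ := exists_linearIndepOn_of_mem_hull S hx
      exact Set.mem_biUnion (x := T) ⟨hTS, hT⟩ hxT
    · exact Submodule.span_mono (by simpa using hT.1)
  rw [hunion]
  exact (S.powerset.finite_toSet.subset fun T hT => by simpa using hT.1).isClosed_biUnion
    fun T hT => isClosed_hull_of_linearIndepOn hT.2

end Topology

section Duality

variable {N : Type*} [AddCommGroup N] [Module ℝ N]

theorem apply_mem_hull_image {M : Type*} [AddCommGroup M] [Module ℝ M] (f : N →ₗ[ℝ] M)
    {s : Set N} {y : N} (hy : y ∈ hull ℝ s) : f y ∈ hull ℝ (f '' s) :=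
  Submodule.apply_mem_span_image_of_mem_span (f.restrictScalars _) hy

theorem exists_dual_neg_of_notMem_hull [FiniteDimensional ℝ N] {S : Finset N} {x : N}
    (hx : x ∉ hull ℝ (S : Set N)) :
    ∃ φ : Module.Dual ℝ N, (∀ y ∈ hull ℝ (S : Set N), 0 ≤ φ y) ∧ φ x < 0 := by
  classical
  let e := (Module.finBasis ℝ N).equivFun
  have hex : e x ∉ hull ℝ (S.image e : Set _) := fun h => hx <| by
    simpa [Set.image_image] using apply_mem_hull_image e.symm.toLinearMap h
  let C : ProperCone ℝ (Fin (Module.finrank ℝ N) → ℝ) :=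
    ⟨hull ℝ (S.image e : Set _), isClosed_hull_finset _⟩
  obtain ⟨f, hf, hfx⟩ := ProperCone.hyperplane_separation_point C hex
  refine ⟨f.toLinearMap ∘ₗ e.toLinearMap, fun y hy => hf _ ?_, hfx⟩
  simpa [C] using apply_mem_hull_image e.toLinearMap hy

theorem neg_mem_hull_of_apply_eq_zero {s : Set N} {m : Module.Dual ℝ N}
    (hm : ∀ w ∈ hull ℝ s, 0 ≤ m w) (hs : ∀ g ∈ s, m g = 0 → -g ∈ hull ℝ s) {w : N}
    (hw : w ∈ hull ℝ s) (hmw : m w = 0) : -w ∈ hull ℝ s := by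
  induction hw using Submodule.span_induction with
  | mem g hg => exact hs g hg hmw
  | zero => simp
  | add x z hx hz ihx ihz =>
    rw [map_add] at hmw
    have hmx := hm x hx
    have hmz := hm z hz
    rw [neg_add]
    exact add_mem (ihx (by linarith)) (ihz (by linarith))
  | smul t x hx ih =>
    rw [LinearMap.map_smul_of_tower] at hmw
    rcases smul_eq_zero.1 hmw with ht | hmx
    · simp [ht]
    · rw [← smul_neg]
      exact Submodule.smul_mem _ t (ih hmx)

theorem exists_dual_neg_mem_of_eq_zero_of_fg [FiniteDimensional ℝ N] {C : PointedCone ℝ N}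
    (hC : C.FG) : ∃ m : Module.Dual ℝ N, (∀ w ∈ C, 0 ≤ m w) ∧ ∀ w ∈ C, m w = 0 → -w ∈ C := by
  obtain ⟨S, rfl⟩ := hC
  have hsep : ∀ g : N, ∃ y : Module.Dual ℝ N,
      (∀ w ∈ hull ℝ (S : Set N), 0 ≤ y w) ∧ (-g ∈ hull ℝ (S : Set N) ∨ 0 < y g) := by
    intro g
    by_cases hg : -g ∈ hull ℝ (S : Set N)
    · exact ⟨0, fun _ _ => le_rfl, Or.inl hg⟩
    · obtain ⟨y, hy, hyg⟩ := exists_dual_neg_of_notMem_hull hg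
      exact ⟨y, hy, Or.inr (by simpa using hyg)⟩
  choose y hy hyg using hsep
  have hm : ∀ w ∈ hull ℝ (S : Set N), 0 ≤ (∑ g ∈ S, y g) w := fun w hw => by
    simpa only [LinearMap.sum_apply] using Finset.sum_nonneg fun g _ => hy g w hw
  refine ⟨∑ g ∈ S, y g, hm, fun w hw => neg_mem_hull_of_apply_eq_zero hm (fun g hg hmg => ?_) hw⟩
  rw [LinearMap.sum_apply] at hmg
  have hyg0 : y g g = 0 :=
    (Finset.sum_eq_zero_iff_of_nonneg fun g' _ => hy g' g (subset_hull hg)).1 hmg g hg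
  exact (hyg g).resolve_right hyg0.not_gt

end Duality

end PointedCone

theorem IsPolyhedralCone.exists_fg {N : Type*} [AddCommGroup N] [Module ℝ N] {σ : Set N}
    (hσ : IsPolyhedralCone σ) : ∃ C : PointedCone ℝ N, C.FG ∧ (C : Set N) = σ := by
  obtain ⟨S, rfl⟩ := hσ
  exact ⟨PointedCone.hull ℝ (S : Set N), ⟨S, rfl⟩, Set.ext fun _ => PointedCone.mem_hull_finset_iff⟩

open Submodule in
theorem inter_eq_ker_inter_of_isFaceOf {N : Type*} [AddCommGroup N] [Module ℝ N]
    {C C' : PointedCone ℝ N} {m : Module.Dual ℝ N} (hm : ∀ w ∈ C ⊔ -C', 0 ≤ m w)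
    (hm0 : ∀ w ∈ C ⊔ -C', m w = 0 → -w ∈ C ⊔ -C') (hface : IsFaceOf ((C : Set N) ∩ C') C) :
    (C : Set N) ∩ C' = {v | m v = 0} ∩ C := by
  obtain ⟨m₁, hm₁, hτ⟩ := hface
  ext v
  constructor
  · rintro ⟨hvC, hvC'⟩
    refine ⟨le_antisymm ?_ (hm v (mem_sup_left hvC)), hvC⟩
    simpa using hm (-v) (mem_sup_right (mem_neg.2 (by simpa using hvC')))
  · rintro ⟨hmv, hvC⟩
    obtain ⟨a, ha, b, hb, hab⟩ := mem_sup.1 (hm0 v (mem_sup_left hvC) hmv)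
    have hvab : v + a = -b := by
      rw [← sub_eq_zero, sub_neg_eq_add, add_assoc, hab, add_neg_cancel]
    have hva : v + a ∈ (C : Set N) ∩ C' := ⟨add_mem hvC ha, hvab ▸ mem_neg.1 hb⟩
    rw [hτ] at hva ⊢
    have hm₁v : 0 ≤ m₁ v := hm₁ v hvC
    have hm₁a : 0 ≤ m₁ a := hm₁ a ha
    have hm₁va : m₁ v + m₁ a = 0 := by simpa using hva.1
    exact ⟨show m₁ v = 0 by linarith, hvC⟩

end

/-- Separation Lemma: if polyhedral cones `σ` and `σ'` meet in the common face
`τ = σ ∩ σ'`, then there is `m ∈ σ∨ ∩ (-σ')∨` with `τ = H_m ∩ σ = H_m ∩ σ'`. -/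
theorem separation_lemma {N : Type*} [AddCommGroup N] [Module ℝ N]
    [FiniteDimensional ℝ N] (σ σ' : Set N)
    (hσ : IsPolyhedralCone σ) (hσ' : IsPolyhedralCone σ')
    (hface : IsFaceOf (σ ∩ σ') σ) (hface' : IsFaceOf (σ ∩ σ') σ') :
    ∃ m : Module.Dual ℝ N, m ∈ dualCone σ ∧ m ∈ dualCone (-σ') ∧
      σ ∩ σ' = {v | m v = 0} ∩ σ ∧ σ ∩ σ' = {v | m v = 0} ∩ σ' := by
  obtain ⟨C, hC, rfl⟩ := hσ.exists_fg
  obtain ⟨C', hC', rfl⟩ := hσ'.exists_fg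
  obtain ⟨m, hm, hm0⟩ := PointedCone.exists_dual_neg_mem_of_eq_zero_of_fg (hC.sup hC'.neg)
  have hτ' : (C' : Set N) ∩ C = {v | (-m) v = 0} ∩ C' := by
    refine inter_eq_ker_inter_of_isFaceOf (fun w hw => ?_) (fun w hw hw0 => ?_)
      (by rwa [Set.inter_comm])
    · simpa using hm _ (Submodule.mem_sup_neg_comm.1 hw)
    · exact Submodule.mem_sup_neg_comm.2
        (hm0 _ (Submodule.mem_sup_neg_comm.1 hw) (by simpa using hw0))
  refine ⟨m, fun v hv => hm v (Submodule.mem_sup_left hv),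
    fun v hv => hm v (Submodule.mem_sup_right hv), inter_eq_ker_inter_of_isFaceOf hm hm0 hface, ?_⟩
  simpa [Set.inter_comm] using hτ'
end

section
/- For a face τ of a polyhedral cone σ ⊆ N, the set τ* = σ∨ ∩ τ⊥ is a face of σ∨, and the map τ ↦ τ* is an inclusion-reversing bijection between the faces of σ and the faces of σ∨. -/
/-- The dual cone (in `N`) of a subset of the dual space, via evaluation. -/
def dualConeBack {N : Type*} [AddCommGroup N] [Module ℝ N]
    (C : Set (Module.Dual ℝ N)) : Set N := {v | ∀ u ∈ C, 0 ≤ u v}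

/-- A face of a cone `C` in the dual space: `C ∩ H_x` for `x` in the dual cone of `C`. -/
def IsDualFaceOf {N : Type*} [AddCommGroup N] [Module ℝ N]
    (F C : Set (Module.Dual ℝ N)) : Prop :=
  ∃ x ∈ dualConeBack C, F = {u ∈ C | u x = 0}

open Finset

section

variable {N : Type*} [AddCommGroup N] [Module ℝ N]

def finsetCone (S : Finset N) : Set N :=
  {x | ∃ c : N → ℝ, (∀ v, 0 ≤ c v) ∧ x = ∑ v ∈ S, c v • v}

lemma IsFaceOf.subset {τ σ : Set N} (hτ : IsFaceOf τ σ) : τ ⊆ σ := by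
  obtain ⟨m, -, rfl⟩ := hτ
  exact Set.inter_subset_right

lemma IsFaceOf.subset_iff_dualCone_inter_perp_subset {σ τ τ' : Set N} (hτ : τ ⊆ σ)
    (hτ' : IsFaceOf τ' σ) : τ ⊆ τ' ↔ dualCone σ ∩ perp τ' ⊆ dualCone σ ∩ perp τ := by
  refine ⟨fun h u ⟨hu, hperp⟩ => ⟨hu, fun y hy => hperp y (h hy)⟩, fun h y hy => ?_⟩
  obtain ⟨m, hm, rfl⟩ := hτ'
  exact ⟨(h ⟨hm, fun z hz => hz.1⟩).2 y hy, hτ hy⟩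

lemma IsFaceOf.eq_of_dualCone_inter_perp_eq {σ τ τ' : Set N} (hτ : IsFaceOf τ σ)
    (hτ' : IsFaceOf τ' σ) (h : dualCone σ ∩ perp τ = dualCone σ ∩ perp τ') : τ = τ' :=
  (hτ'.subset_iff_dualCone_inter_perp_subset hτ.subset).2 h.ge |>.antisymm
    ((hτ.subset_iff_dualCone_inter_perp_subset hτ'.subset).2 h.le)

lemma exists_mem_forall_pos_of_exists_ne_zero {F : Set (Module.Dual ℝ N)} (h0 : 0 ∈ F)
    (hadd : ∀ u w, u ∈ F → w ∈ F → u + w ∈ F) (G : Finset N)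
    (hG : ∀ u ∈ F, ∀ v ∈ G, 0 ≤ u v) :
    ∃ m ∈ F, ∀ v ∈ G, (∃ u ∈ F, u v ≠ 0) → 0 < m v := by
  have hwit : ∀ v : N, ∃ w ∈ F, (∃ u ∈ F, u v ≠ 0) → w v ≠ 0 := fun v => by
    by_cases hv : ∃ u ∈ F, u v ≠ 0
    · obtain ⟨u, huF, huv⟩ := hv
      exact ⟨u, huF, fun _ => huv⟩
    · exact ⟨0, h0, fun h => absurd h hv⟩
  choose w hwF hwv using hwit
  refine ⟨∑ v ∈ G, w v, sum_induction w (· ∈ F) hadd h0 fun v _ => hwF v, fun v hv hne => ?_⟩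
  rw [LinearMap.sum_apply]
  exact sum_pos' (fun v' _ => hG _ (hwF v') v hv)
    ⟨v, hv, (hG _ (hwF v) v hv).lt_of_ne (hwv v hne).symm⟩

section finsetCone

variable {S : Finset N}

lemma subset_finsetCone : (S : Set N) ⊆ finsetCone S := by
  classical
  intro v (hv : v ∈ S)
  exact ⟨fun w => if w = v then 1 else 0, fun w => by positivity, by simp [ite_smul, hv]⟩

lemma mem_dualCone_finsetCone_iff {u : Module.Dual ℝ N} :
    u ∈ dualCone (finsetCone S) ↔ ∀ v ∈ S, 0 ≤ u v := by
  refine ⟨fun hu v hv => hu v (subset_finsetCone hv), ?_⟩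
  rintro hu _ ⟨c, hc, rfl⟩
  simp only [map_sum, map_smul, smul_eq_mul]
  exact sum_nonneg fun v hv => mul_nonneg (hc v) (hu v hv)

lemma mem_perp_face_iff {m u : Module.Dual ℝ N} (hm : m ∈ dualCone (finsetCone S)) :
    u ∈ perp ({v | m v = 0} ∩ finsetCone S) ↔ ∀ v ∈ S, m v = 0 → u v = 0 := by
  refine ⟨fun h v hv hmv => h v ⟨hmv, subset_finsetCone hv⟩, ?_⟩
  rintro h _ ⟨hmy, c, hc, rfl⟩
  rw [mem_dualCone_finsetCone_iff] at hm
  simp only [Set.mem_ofPred_eq, map_sum, map_smul, smul_eq_mul] at hmy ⊢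
  have hterm := (sum_eq_zero_iff_of_nonneg fun v hv => mul_nonneg (hc v) (hm v hv)).1 hmy
  refine sum_eq_zero fun v hv => ?_
  rcases mul_eq_zero.1 (hterm v hv) with hcv | hmv
  · rw [hcv, zero_mul]
  · rw [h v hv hmv, mul_zero]

lemma isDualFaceOf_dualCone_inter_perp {τ : Set N} (hτ : IsFaceOf τ (finsetCone S)) :
    IsDualFaceOf (dualCone (finsetCone S) ∩ perp τ) (dualCone (finsetCone S)) := by
  classical
  obtain ⟨m, hm, rfl⟩ := hτ
  refine ⟨∑ v ∈ S with m v = 0, v, fun u hu => ?_, ?_⟩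
  · rw [map_sum]
    exact sum_nonneg fun v hv => mem_dualCone_finsetCone_iff.1 hu v (mem_filter.1 hv).1
  · ext u
    refine and_congr_right fun hu => ?_
    rw [mem_perp_face_iff hm, map_sum, sum_eq_zero_iff_of_nonneg fun v hv =>
      mem_dualCone_finsetCone_iff.1 hu v (mem_filter.1 hv).1]
    simp only [mem_filter, and_imp]

lemma exists_smul_sub_mem_dualCone {m u : Module.Dual ℝ N}
    (hm : m ∈ dualCone (finsetCone S)) (hu : u ∈ dualCone (finsetCone S))
    (h : ∀ v ∈ S, m v = 0 → u v = 0) :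
    ∃ t : ℝ, t • m - u ∈ dualCone (finsetCone S) := by
  rw [mem_dualCone_finsetCone_iff] at hm hu
  have hratio : ∀ v ∈ S, 0 ≤ u v / m v := fun v hv => div_nonneg (hu v hv) (hm v hv)
  refine ⟨∑ v ∈ S, u v / m v, mem_dualCone_finsetCone_iff.2 fun v hv => ?_⟩
  simp only [LinearMap.sub_apply, LinearMap.smul_apply, smul_eq_mul, sub_nonneg]
  rcases (hm v hv).eq_or_lt with hmv | hmv
  · rw [← hmv, h v hv hmv.symm, mul_zero]
  · calc u v = u v / m v * m v := (div_mul_cancel₀ _ hmv.ne').symm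
      _ ≤ _ := mul_le_mul_of_nonneg_right (single_le_sum hratio hv) hmv.le

lemma exists_isFaceOf_eq_dualCone_inter_perp {F : Set (Module.Dual ℝ N)}
    (hF : IsDualFaceOf F (dualCone (finsetCone S))) :
    ∃ τ, IsFaceOf τ (finsetCone S) ∧ F = dualCone (finsetCone S) ∩ perp τ := by
  obtain ⟨x, hx, rfl⟩ := hF
  obtain ⟨m, ⟨hm, hmx⟩, hmax⟩ := exists_mem_forall_pos_of_exists_ne_zero
    (F := {u ∈ dualCone (finsetCone S) | u x = 0})
    ⟨fun _ _ => le_rfl, rfl⟩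
    (fun u w ⟨hu, hux⟩ ⟨hw, hwx⟩ =>
      ⟨fun y hy => add_nonneg (hu y hy) (hw y hy), by simp [hux, hwx]⟩)
    S (fun u hu v hv => hu.1 v (subset_finsetCone hv))
  refine ⟨_, ⟨m, hm, rfl⟩, Set.ext fun u =>
    ⟨fun ⟨hu, hux⟩ => ⟨hu, ?_⟩, fun ⟨hu, hperp⟩ => ⟨hu, ?_⟩⟩⟩
  · exact (mem_perp_face_iff hm).2 fun v hv hmv =>
      by_contra fun huv => (hmax v hv ⟨u, ⟨hu, hux⟩, huv⟩).ne' hmv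
  · obtain ⟨t, ht⟩ := exists_smul_sub_mem_dualCone hm hu ((mem_perp_face_iff hm).1 hperp)
    have hux := hx _ ht
    simp only [LinearMap.sub_apply, LinearMap.smul_apply, hmx, smul_zero, zero_sub,
      Left.nonneg_neg_iff] at hux
    exact hux.antisymm (hx u hu)

end finsetCone

end

theorem face_duality_general {N : Type*} [AddCommGroup N] [Module ℝ N]
    (σ : Set N) (hσ : IsPolyhedralCone σ) :
    (∀ τ, IsFaceOf τ σ → IsDualFaceOf (dualCone σ ∩ perp τ) (dualCone σ)) ∧
    (∀ τ τ', IsFaceOf τ σ → IsFaceOf τ' σ →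
      (τ ⊆ τ' ↔ dualCone σ ∩ perp τ' ⊆ dualCone σ ∩ perp τ)) ∧
    (∀ τ τ', IsFaceOf τ σ → IsFaceOf τ' σ →
      dualCone σ ∩ perp τ = dualCone σ ∩ perp τ' → τ = τ') ∧
    (∀ F, IsDualFaceOf F (dualCone σ) →
      ∃ τ, IsFaceOf τ σ ∧ F = dualCone σ ∩ perp τ) := by
  obtain ⟨S, rfl⟩ := hσ
  exact ⟨fun τ hτ => isDualFaceOf_dualCone_inter_perp hτ,
    fun τ τ' hτ hτ' => hτ'.subset_iff_dualCone_inter_perp_subset hτ.subset,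
    fun τ τ' hτ hτ' => hτ.eq_of_dualCone_inter_perp_eq hτ',
    fun F hF => exists_isFaceOf_eq_dualCone_inter_perp hF⟩

/-- For a face `τ` of a polyhedral cone `σ`, the set `τ* = σ∨ ∩ τ⊥` is a face of `σ∨`,
and `τ ↦ τ*` is an inclusion-reversing bijection between the faces of `σ` and those of
`σ∨`. -/
theorem face_duality {N : Type*} [AddCommGroup N] [Module ℝ N]
    [FiniteDimensional ℝ N] (σ : Set N) (hσ : IsPolyhedralCone σ) :
    (∀ τ, IsFaceOf τ σ → IsDualFaceOf (dualCone σ ∩ perp τ) (dualCone σ)) ∧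
    (∀ τ τ', IsFaceOf τ σ → IsFaceOf τ' σ →
      (τ ⊆ τ' ↔ dualCone σ ∩ perp τ' ⊆ dualCone σ ∩ perp τ)) ∧
    (∀ τ τ', IsFaceOf τ σ → IsFaceOf τ' σ →
      dualCone σ ∩ perp τ = dualCone σ ∩ perp τ' → τ = τ') ∧
    (∀ F, IsDualFaceOf F (dualCone σ) →
      ∃ τ, IsFaceOf τ σ ∧ F = dualCone σ ∩ perp τ) :=
  face_duality_general σ hσ
end

section
/- Gordan's Lemma: for a rational polyhedral cone σ ⊆ N, the monoid S_σ = σ∨ ∩ M_ℤ is finitely generated. -/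
/-- The real cone generated by a finite set of lattice points in `ℝⁿ`. -/
def ratConeOf {n : ℕ} (S : Finset (Fin n → ℤ)) : Set (Fin n → ℝ) :=
  {x | ∃ c : (Fin n → ℤ) → ℝ, (∀ v, 0 ≤ c v) ∧
    x = ∑ v ∈ S, c v • (fun i => (v i : ℝ))}

/-- The monoid of lattice points of the dual cone: `S_σ = σ∨ ∩ M_ℤ`. -/
def latticeDual {n : ℕ} (σ : Set (Fin n → ℝ)) : Set (Fin n → ℤ) :=
  {u | ∀ v ∈ σ, 0 ≤ ∑ i, (u i : ℝ) * v i}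

/-!
Write a lattice point as `u = a - b` with `a, b ∈ ℕⁿ` and record the slacks `c_v = ⟨u, v⟩ ∈ ℕ`.
Then `S_σ` is the image of the solution monoid `{(a, b, c) | ⟨a - b, v⟩ = c_v for all v}` in
`ℕⁿ × ℕⁿ × ℕ^S`. A monoid of solutions of linear equations in some `ℕᵏ` is closed under
subtraction, so by Dickson's lemma it is generated by its finitely many minimal nonzero elements
(`AddSubmonoid.fg_eqLocusM`), and finite generation passes to the image.
-/

theorem AddSubmonoid.fg_comap_nonneg {κ ι : Type*} [Finite κ] [Finite ι]
    (f : (κ → ℤ) →+ (ι → ℤ)) : ((AddSubmonoid.nonneg (ι → ℤ)).comap f).FG := by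
  let diff : (κ → ℕ) × (κ → ℕ) × (ι → ℕ) →+ (κ → ℤ) :=
    ((Nat.castAddMonoidHom ℤ).compLeft κ).comp (AddMonoidHom.fst _ _) -
      (((Nat.castAddMonoidHom ℤ).compLeft κ).comp (AddMonoidHom.fst _ _)).comp
        (AddMonoidHom.snd _ _)
  let slack : (κ → ℕ) × (κ → ℕ) × (ι → ℕ) →+ (ι → ℤ) :=
    (((Nat.castAddMonoidHom ℤ).compLeft ι).comp (AddMonoidHom.snd _ _)).comp
      (AddMonoidHom.snd _ _)
  suffices h : ((f.comp diff).eqLocusM slack).map diff = (AddSubmonoid.nonneg _).comap f from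
    h ▸ (AddSubmonoid.fg_eqLocusM _ _).map diff
  ext u
  simp only [AddSubmonoid.mem_map, AddSubmonoid.mem_comap, AddSubmonoid.mem_nonneg]
  constructor
  · rintro ⟨d, hd, rfl⟩ j
    have : f (diff d) j = d.2.2 j := congrFun hd j
    simp [this]
  · intro h
    set d : (κ → ℕ) × (κ → ℕ) × (ι → ℕ) :=
      (fun i => (u i).toNat, fun i => (-u i).toNat, fun j => (f u j).toNat)
    have hdiff : diff d = u := by funext i; simp [d, diff]
    refine ⟨d, ?_, hdiff⟩
    change f (diff d) = slack d
    funext j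
    simp [hdiff, d, slack, Int.toNat_of_nonneg (h j)]

lemma latticeDual_ratConeOf {n : ℕ} (S : Finset (Fin n → ℤ)) :
    latticeDual (ratConeOf S) = {u | ∀ v ∈ S, 0 ≤ u ⬝ᵥ v} := by
  have cast_dotProduct (u v : Fin n → ℤ) :
      ∑ i, (u i : ℝ) * v i = ((u ⬝ᵥ v : ℤ) : ℝ) := by
    simp [dotProduct]
  ext u
  constructor
  · intro hu v hv
    have hv_mem : (fun i => (v i : ℝ)) ∈ ratConeOf S := by
      refine ⟨Pi.single v 1, fun w => by by_cases h : w = v <;> simp [h], ?_⟩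
      simp [Pi.single_apply, hv]
    exact_mod_cast cast_dotProduct u v ▸ hu _ hv_mem
  · rintro hu x ⟨c, hc, rfl⟩
    calc (0 : ℝ) ≤ ∑ v ∈ S, c v * ((u ⬝ᵥ v : ℤ) : ℝ) :=
          Finset.sum_nonneg fun v hv => mul_nonneg (hc v) (by exact_mod_cast hu v hv)
      _ = _ := by
          simp only [← cast_dotProduct, Finset.mul_sum, Finset.sum_apply, Pi.smul_apply,
            smul_eq_mul]
          rw [Finset.sum_comm]
          exact Finset.sum_congr rfl fun _ _ => Finset.sum_congr rfl fun _ _ => by ring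

/-- Gordan's Lemma: for a rational polyhedral cone `σ`, the monoid `S_σ = σ∨ ∩ M_ℤ`
is finitely generated. -/
theorem gordan {n : ℕ} (S : Finset (Fin n → ℤ)) :
    ∃ T : Finset (Fin n → ℤ),
      (AddSubmonoid.closure (T : Set (Fin n → ℤ)) : Set (Fin n → ℤ)) =
        latticeDual (ratConeOf S) := by
  let pairing : (Fin n → ℤ) →+ (S → ℤ) :=
    AddMonoidHom.mk' (fun u v => u ⬝ᵥ v) fun a b => funext fun v => add_dotProduct a b v
  obtain ⟨T, hT⟩ := AddSubmonoid.fg_comap_nonneg pairing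
  refine ⟨T, ?_⟩
  rw [hT, latticeDual_ratConeOf]
  ext u
  simp [pairing, Pi.le_def]
end

section
/- If σ is a polyhedral cone and τ = H_m ∩ σ is the face cut out by m ∈ σ∨, then τ∨ = σ∨ + ℝ≥0·(−m). -/
/-- If `τ = H_m ∩ σ` is the face of the polyhedral cone `σ` cut out by `m ∈ σ∨`,
then `τ∨ = σ∨ + ℝ≥0·(−m)`. -/
theorem dual_of_face {N : Type*} [AddCommGroup N] [Module ℝ N]
    [FiniteDimensional ℝ N] (σ τ : Set N) (hσ : IsPolyhedralCone σ)
    (m : Module.Dual ℝ N) (hm : m ∈ dualCone σ) (hτ : τ = {v | m v = 0} ∩ σ) :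
    dualCone τ = {w : Module.Dual ℝ N |
      ∃ u ∈ dualCone σ, ∃ r : ℝ, 0 ≤ r ∧ w = u + r • (-m)} := by
  obtain ⟨S, hS⟩ := hσ
  have hSσ : ∀ v ∈ S, v ∈ σ := by
    intro v hv
    rw [hS]
    classical
    refine ⟨fun x => if x = v then 1 else 0, fun x => by by_cases h : x = v <;> simp [h], ?_⟩
    simp [Finset.sum_ite_eq', hv]
  ext w
  simp only [Set.mem_setOf_eq]
  constructor
  · intro hw
    set r : ℝ := ∑ v ∈ S, max (-(w v) / m v) 0 with hr
    have hr0 : 0 ≤ r := Finset.sum_nonneg fun v _ => le_max_right _ _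
    have key : ∀ v ∈ S, 0 ≤ w v + r * m v := by
      intro v hv
      rcases eq_or_lt_of_le (hm v (hSσ v hv)) with h0 | hpos
      · have hvτ : v ∈ τ := by rw [hτ]; exact ⟨h0.symm, hSσ v hv⟩
        have h1 := hw v hvτ
        nlinarith
      · have hterm : -(w v) / m v ≤ r :=
          le_trans (le_max_left _ _)
            (Finset.single_le_sum (fun x _ => le_max_right (-(w x) / m x) 0) hv)
        have h2 : -(w v) ≤ r * m v := by
          have := (div_le_iff₀ hpos).mp hterm
          linarith
        linarith
    refine ⟨w + r • m, ?_, r, hr0, ?_⟩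
    · intro x hx
      rw [hS] at hx
      obtain ⟨c, hc, rfl⟩ := hx
      rw [map_sum]
      apply Finset.sum_nonneg
      intro v hv
      rw [map_smul, smul_eq_mul]
      exact mul_nonneg (hc v) (by simpa using key v hv)
    · rw [smul_neg]; abel
  · rintro ⟨u, hu, r, hr, rfl⟩
    intro v hv
    rw [hτ] at hv
    obtain ⟨hmv, hvσ⟩ := hv
    simpa [Set.mem_setOf_eq.mp hmv] using hu v hvσ
end

section
/- If σ and σ' are rational polyhedral cones meeting in the common face τ = σ ∩ σ', then the lattice monoid S_τ equals S_σ + S_{σ'}. -/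
/-- The dual cone of `σ ⊆ ℝⁿ` under the dot-product pairing. -/
def dualCone' {n : ℕ} (σ : Set (Fin n → ℝ)) : Set (Fin n → ℝ) :=
  {u | ∀ v ∈ σ, 0 ≤ ∑ i, u i * v i}

/-- `τ` is a face of `σ`: cut out by a supporting hyperplane. -/
def IsFaceOf' {n : ℕ} (τ σ : Set (Fin n → ℝ)) : Prop :=
  ∃ m ∈ dualCone' σ, τ = {v | ∑ i, m i * v i = 0} ∩ σ

open Finset

/-! ### dot products -/

def qdot {n : ℕ} (u v : Fin n → ℚ) : ℚ := ∑ i, u i * v i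
def zdot {n : ℕ} (u v : Fin n → ℤ) : ℤ := ∑ i, u i * v i

noncomputable section

/-- integer vector cast to ℚⁿ -/
def cQ {n : ℕ} (v : Fin n → ℤ) : Fin n → ℚ := fun i => (v i : ℚ)
/-- integer vector cast to ℝⁿ -/
def cR {n : ℕ} (v : Fin n → ℤ) : Fin n → ℝ := fun i => (v i : ℝ)

lemma zdot_cast_q {n : ℕ} (u v : Fin n → ℤ) : ((zdot u v : ℤ) : ℚ) = qdot (cQ u) (cQ v) := by
  simp [zdot, qdot, cQ]

lemma zdot_cast_r {n : ℕ} (u v : Fin n → ℤ) :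
    ((zdot u v : ℤ) : ℝ) = ∑ i, (u i : ℝ) * (v i : ℝ) := by
  simp [zdot]

/-- generator of a cone lies in the cone -/
lemma gen_mem_ratConeOf {n : ℕ} {S : Finset (Fin n → ℤ)} {v : Fin n → ℤ} (hv : v ∈ S) :
    cR v ∈ ratConeOf S := by
  refine ⟨fun u => if u = v then 1 else 0, fun u => by positivity, ?_⟩
  have : ∀ u ∈ S, (if u = v then (1:ℝ) else 0) • (fun i => (u i : ℝ))
      = if u = v then (fun i => (u i : ℝ)) else 0 := by
    intro u _; split <;> simp
  rw [Finset.sum_congr rfl this, Finset.sum_ite_eq' S v (fun u => (fun i => (u i : ℝ)))]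
  · simp [hv]; rfl

/-- a rational nonneg combination of generators lies in the cone -/
lemma ratCone_memQ {n : ℕ} (S : Finset (Fin n → ℤ)) (q : (Fin n → ℤ) → ℚ)
    (hq : ∀ u, 0 ≤ q u) (t : Fin n → ℚ)
    (ht : t = ∑ u ∈ S, q u • (cQ u)) :
    (fun i => ((t i : ℚ) : ℝ)) ∈ ratConeOf S := by
  refine ⟨fun u => (q u : ℝ), fun u => by simpa using (hq u), ?_⟩
  funext i
  rw [ht]
  simp only [Finset.sum_apply, Pi.smul_apply, smul_eq_mul, cQ]
  push_cast
  ring_nf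

/-- dual membership from nonnegativity on generators -/
lemma mem_latticeDual_of_gens {n : ℕ} {S : Finset (Fin n → ℤ)} {u : Fin n → ℤ}
    (h : ∀ v ∈ S, 0 ≤ zdot u v) : u ∈ latticeDual (ratConeOf S) := by
  rintro x ⟨c, hc, rfl⟩
  have : ∑ i, (u i : ℝ) * (∑ v ∈ S, c v • (fun j => (v j : ℝ))) i
      = ∑ v ∈ S, c v * ((zdot u v : ℤ) : ℝ) := by
    simp only [Finset.sum_apply, Pi.smul_apply, smul_eq_mul, zdot_cast_r, Finset.mul_sum]
    rw [Finset.sum_comm]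
    exact Finset.sum_congr rfl fun v _ => Finset.sum_congr rfl fun i _ => by ring
  rw [this]
  refine Finset.sum_nonneg fun v hv => mul_nonneg (hc v) ?_
  exact_mod_cast h v hv

end

lemma qdot_smul {n : ℕ} (u v : Fin n → ℚ) (a : ℚ) : qdot u (a • v) = a * qdot u v := by
  simp only [qdot, Finset.mul_sum, Pi.smul_apply, smul_eq_mul]
  exact Finset.sum_congr rfl fun i _ => by ring

lemma qdot_sub {n : ℕ} (u v w : Fin n → ℚ) : qdot u (v - w) = qdot u v - qdot u w := by
  simp [qdot, mul_sub, Finset.sum_sub_distrib]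

lemma qdot_smul_left {n : ℕ} (u v : Fin n → ℚ) (a : ℚ) : qdot (a • u) v = a * qdot u v := by
  simp only [qdot, Finset.mul_sum, Pi.smul_apply, smul_eq_mul]
  exact Finset.sum_congr rfl fun i _ => by ring

lemma qdot_sub_left {n : ℕ} (u v w : Fin n → ℚ) : qdot (u - v) w = qdot u w - qdot v w := by
  simp [qdot, sub_mul, Finset.sum_sub_distrib]

lemma qdot_neg_self_lt {n : ℕ} (x : Fin n → ℚ) (hx : x ≠ 0) : qdot (-x) x < 0 := by
  have h1 : 0 < qdot x x := by
    have hex : ∃ i, x i ≠ 0 := by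
      by_contra h; push_neg at h; exact hx (funext h)
    obtain ⟨i, hi⟩ := hex
    refine Finset.sum_pos' (fun j _ => mul_self_nonneg _) ⟨i, Finset.mem_univ i, ?_⟩
    exact mul_self_pos.mpr hi
  have : qdot (-x) x = - qdot x x := by simp [qdot]
  rw [this]; linarith

/-- Farkas lemma, contrapositive form, over ℚ, by induction on the number of generators. -/
theorem farkas_aux {n : ℕ} : ∀ (k : ℕ) (v : Fin k → (Fin n → ℚ)) (x : Fin n → ℚ),
    (¬ ∃ c : Fin k → ℚ, (∀ i, 0 ≤ c i) ∧ x = ∑ i, c i • v i) →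
    ∃ u : Fin n → ℚ, (∀ i, 0 ≤ qdot u (v i)) ∧ qdot u x < 0 := by
  intro k
  induction k with
  | zero =>
      intro v x hx
      refine ⟨-x, fun i => i.elim0, qdot_neg_self_lt x ?_⟩
      intro h
      exact hx ⟨fun i => 0, fun i => le_refl _, by simp [h]⟩
  | succ k ih =>
      intro v x hx
      have hx' : ¬ ∃ c : Fin k → ℚ, (∀ i, 0 ≤ c i) ∧ x = ∑ i, c i • v i.castSucc := by
        rintro ⟨c, hc, hrep⟩
        refine hx ⟨Fin.snoc c 0, ?_, ?_⟩
        · intro i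
          refine Fin.lastCases ?_ ?_ i
          · simp
          · intro j; simpa using hc j
        · rw [Fin.sum_univ_castSucc]
          simp only [Fin.snoc_last, Fin.snoc_castSucc, zero_smul, add_zero]
          exact hrep
      obtain ⟨u, hu, hux⟩ := ih (fun i => v i.castSucc) x hx'
      by_cases huy : 0 ≤ qdot u (v (Fin.last k))
      · refine ⟨u, ?_, hux⟩
        intro i
        refine Fin.lastCases ?_ ?_ i
        · exact huy
        · intro j; exact hu j
      · push_neg at huy
        set y : Fin n → ℚ := v (Fin.last k) with hy
        have hx'' : ¬ ∃ c : Fin k → ℚ, (∀ i, 0 ≤ c i) ∧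
            (x - (qdot u x / qdot u y) • y) =
              ∑ i, c i • (v i.castSucc - (qdot u (v i.castSucc) / qdot u y) • y) := by
          rintro ⟨c, hc, hrep⟩
          set B : ℚ := ∑ i, c i * (qdot u (v i.castSucc) / qdot u y) with hB
          have expand : x - (qdot u x / qdot u y) • y = (∑ i, c i • v i.castSucc) - B • y := by
            rw [hrep]
            rw [hB, Finset.sum_smul, ← Finset.sum_sub_distrib]
            exact Finset.sum_congr rfl fun i _ => by rw [smul_sub, smul_smul]
          have hxeq : x = (∑ i, c i • v i.castSucc) + (qdot u x / qdot u y - B) • y := by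
            rw [sub_smul]
            have h3 := sub_eq_iff_eq_add.mp expand
            conv_lhs => rw [h3]
            abel
          set lam : ℚ := qdot u x / qdot u y - B with hlam
          have hlam0 : 0 ≤ lam := by
            have h1 : lam = (qdot u x - ∑ i, c i * qdot u (v i.castSucc)) / qdot u y := by
              rw [hlam, hB, sub_div, Finset.sum_div]
              congr 1
              exact Finset.sum_congr rfl fun i _ => by rw [mul_div_assoc]
            have hnum : qdot u x - ∑ i, c i * qdot u (v i.castSucc) < 0 := by
              have : 0 ≤ ∑ i, c i * qdot u (v i.castSucc) :=
                Finset.sum_nonneg fun i _ => mul_nonneg (hc i) (hu i)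
              linarith
            rw [h1]
            exact le_of_lt (div_pos_of_neg_of_neg hnum huy)
          refine hx ⟨Fin.snoc c lam, ?_, ?_⟩
          · intro i
            refine Fin.lastCases ?_ ?_ i
            · simpa using hlam0
            · intro j; simpa using hc j
          · rw [Fin.sum_univ_castSucc]
            simp only [Fin.snoc_last, Fin.snoc_castSucc]
            exact hxeq
        obtain ⟨w, hw, hwx⟩ := ih
          (fun i => v i.castSucc - (qdot u (v i.castSucc) / qdot u y) • y)
          (x - (qdot u x / qdot u y) • y) hx''
        refine ⟨w - (qdot w y / qdot u y) • u, ?_, ?_⟩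
        · intro i
          have key : ∀ z, qdot (w - (qdot w y / qdot u y) • u) z
              = qdot w (z - (qdot u z / qdot u y) • y) := by
            intro z
            rw [qdot_sub_left, qdot_smul_left, qdot_sub, qdot_smul]
            have hy0 : qdot u y ≠ 0 := ne_of_lt huy
            field_simp
          refine Fin.lastCases ?_ ?_ i
          · rw [key]
            have : y - (qdot u y / qdot u y) • y = 0 := by
              rw [div_self (ne_of_lt huy), one_smul, sub_self]
            rw [← hy, this]
            simp [qdot]
          · intro j
            rw [key]
            exact hw j
        · have key : qdot (w - (qdot w y / qdot u y) • u) x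
              = qdot w (x - (qdot u x / qdot u y) • y) := by
            rw [qdot_sub_left, qdot_smul_left, qdot_sub, qdot_smul]
            have hy0 : qdot u y ≠ 0 := ne_of_lt huy
            field_simp
          rw [key]; exact hwx
-- extra qdot lemmas + fintype farkas, to append after farkas_aux
lemma qdot_neg {n : ℕ} (u v : Fin n → ℚ) : qdot u (-v) = - qdot u v := by
  simp [qdot]

lemma qdot_sum_left {n : ℕ} {ι : Type*} [Fintype ι] (u : ι → (Fin n → ℚ)) (z : Fin n → ℚ) :
    qdot (∑ i, u i) z = ∑ i, qdot (u i) z := by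
  simp only [qdot, Finset.sum_apply, Finset.sum_mul]
  rw [Finset.sum_comm]

theorem farkas {n : ℕ} {ι : Type*} [Fintype ι] (v : ι → (Fin n → ℚ)) (x : Fin n → ℚ)
    (h : ∀ u : Fin n → ℚ, (∀ i, 0 ≤ qdot u (v i)) → 0 ≤ qdot u x) :
    ∃ c : ι → ℚ, (∀ i, 0 ≤ c i) ∧ x = ∑ i, c i • v i := by
  by_contra hc
  set e := Fintype.equivFin ι
  have hside : ¬ ∃ c : Fin (Fintype.card ι) → ℚ, (∀ i, 0 ≤ c i) ∧
      x = ∑ i, c i • (v ∘ e.symm) i := by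
    rintro ⟨c, hcc, hrep⟩
    refine hc ⟨c ∘ e, fun i => hcc _, ?_⟩
    rw [hrep]
    exact (Fintype.sum_equiv e (fun i => (c ∘ e) i • v i)
      (fun j => c j • (v ∘ e.symm) j) (fun i => by simp)).symm
  obtain ⟨u, hu, hux⟩ := farkas_aux (Fintype.card ι) (v ∘ e.symm) x hside
  exact absurd (h u fun i => by simpa using hu (e i)) (not_le.mpr hux)

lemma exists_int_scale {n : ℕ} (Mq : Fin n → ℚ) :
    ∃ (d : ℕ) (M : Fin n → ℤ), 0 < d ∧ ∀ i, (M i : ℚ) = d * Mq i := by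
  refine ⟨∏ j, (Mq j).den, fun i => (Mq i).num * (((∏ j, (Mq j).den) / (Mq i).den : ℕ) : ℤ),
    Finset.prod_pos (fun i _ => (Mq i).pos), fun i => ?_⟩
  have hd : (Mq i).den ∣ ∏ j, (Mq j).den := Finset.dvd_prod_of_mem _ (Finset.mem_univ i)
  have h1 : ((∏ j, (Mq j).den) / (Mq i).den) * (Mq i).den = ∏ j, (Mq j).den :=
    Nat.div_mul_cancel hd
  have hden : ((Mq i).den : ℚ) ≠ 0 := Nat.cast_ne_zero.mpr (Mq i).den_nz
  have h2 : (Mq i) * ((Mq i).den : ℚ) = ((Mq i).num : ℚ) :=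
    (eq_div_iff hden).mp (Rat.num_div_den (Mq i)).symm
  calc (((Mq i).num * (((∏ j, (Mq j).den) / (Mq i).den : ℕ) : ℤ) : ℤ) : ℚ)
      = ((Mq i).num : ℚ) * (((∏ j, (Mq j).den) / (Mq i).den : ℕ) : ℚ) := by
        rw [Int.cast_mul, Int.cast_natCast]
    _ = (((∏ j, (Mq j).den) / (Mq i).den : ℕ) : ℚ) * ((Mq i) * ((Mq i).den : ℚ)) := by
        rw [h2]; ring
    _ = (((((∏ j, (Mq j).den) / (Mq i).den) * (Mq i).den : ℕ)) : ℚ) * Mq i := by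
        push_cast; ring
    _ = ((∏ j, (Mq j).den : ℕ) : ℚ) * Mq i := by rw [h1]
lemma sum_indicator_cQ {n : ℕ} {S : Finset (Fin n → ℤ)} {v : Fin n → ℤ} (hv : v ∈ S) :
    ∑ u ∈ S, (if u = v then (1:ℚ) else 0) • cQ u = cQ v := by
  have h : ∀ u ∈ S, (if u = v then (1:ℚ) else 0) • cQ u = if u = v then cQ u else 0 := by
    intro u _; split <;> simp
  rw [Finset.sum_congr rfl h, Finset.sum_ite_eq' S v cQ, if_pos hv]

lemma attach_sum_eq {n : ℕ} (S : Finset (Fin n → ℤ)) (f : {v // v ∈ S} → ℚ) :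
    ∑ a : {v // v ∈ S}, f a • cQ a.1
      = ∑ u ∈ S, (if h : u ∈ S then f ⟨u, h⟩ else 0) • cQ u := by
  rw [Finset.univ_eq_attach,
    ← Finset.sum_attach S (fun u => (if h : u ∈ S then f ⟨u, h⟩ else 0) • cQ u)]
  refine Finset.sum_congr rfl fun a _ => ?_
  rw [dif_pos a.2]

lemma exists_M {n : ℕ} (S S' : Finset (Fin n → ℤ))
    (hface : IsFaceOf' (ratConeOf S ∩ ratConeOf S') (ratConeOf S))
    (hface' : IsFaceOf' (ratConeOf S ∩ ratConeOf S') (ratConeOf S')) :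
    ∃ M : Fin n → ℤ,
      (∀ v ∈ S, 0 < zdot M v ∨ (zdot M v = 0 ∧ cR v ∈ ratConeOf S ∩ ratConeOf S')) ∧
      (∀ v ∈ S', zdot M v < 0 ∨ (zdot M v = 0 ∧ cR v ∈ ratConeOf S ∩ ratConeOf S')) := by
  classical
  obtain ⟨m0, hm0, hτ0⟩ := hface
  obtain ⟨m1, hm1, hτ1⟩ := hface'
  set ι := ({v // v ∈ S} ⊕ {v // v ∈ S'}) with hι
  set g : ι → (Fin n → ℚ) := Sum.elim (fun a => cQ a.1) (fun b => -(cQ b.1)) with hg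
  set Good : (Fin n → ℚ) → Prop := fun u => ∀ i, 0 ≤ qdot u (g i) with hGood
  set Zi : ι → Prop := fun i => ∀ u, Good u → qdot u (g i) = 0 with hZi
  -- pointwise witnesses
  have hchoice : ∀ i, ∃ u, Good u ∧ (¬ Zi i → 0 < qdot u (g i)) := by
    intro i
    by_cases h : Zi i
    · exact ⟨0, fun j => by simp [qdot], fun hn => absurd h hn⟩
    · have h2 : ∃ u, Good u ∧ qdot u (g i) ≠ 0 := by
        by_contra hcon
        push_neg at hcon
        exact h (fun u hu => hcon u hu)
      obtain ⟨u, hu, hne⟩ := h2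
      exact ⟨u, hu, fun _ => lt_of_le_of_ne (hu i) (Ne.symm hne)⟩
  choose U hUg hUs using hchoice
  set Mq : Fin n → ℚ := ∑ i, U i with hMq
  have hMqGood : Good Mq := by
    intro j
    rw [hMq, qdot_sum_left]
    exact Finset.sum_nonneg fun i _ => hUg i j
  have hMqpos : ∀ i, ¬ Zi i → 0 < qdot Mq (g i) := by
    intro i hi
    rw [hMq, qdot_sum_left]
    exact Finset.sum_pos' (fun j _ => hUg j i) ⟨i, Finset.mem_univ i, hUs i hi⟩
  have hMqzero : ∀ i, Zi i → qdot Mq (g i) = 0 := fun i hi => hi Mq hMqGood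
  -- membership of "zero" generators in τ = σ ∩ σ'
  have hZcone : ∀ i, Zi i → ∃ c : ι → ℚ, (∀ j, 0 ≤ c j) ∧ -(g i) = ∑ j, c j • g j := by
    intro i hi
    apply farkas g (-(g i))
    intro u hu
    rw [qdot_neg, hi u hu, neg_zero]
  have hZmem : ∀ i, Zi i → (∀ a : {v // v ∈ S}, i = Sum.inl a →
        cR a.1 ∈ ratConeOf S ∩ ratConeOf S') ∧
      (∀ b : {v // v ∈ S'}, i = Sum.inr b →
        cR b.1 ∈ ratConeOf S ∩ ratConeOf S') := by
    intro i hi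
    obtain ⟨c, hc, hrep⟩ := hZcone i hi
    set qS : (Fin n → ℤ) → ℚ := fun u => if h : u ∈ S then c (Sum.inl ⟨u, h⟩) else 0 with hqS
    set qS' : (Fin n → ℤ) → ℚ := fun u => if h : u ∈ S' then c (Sum.inr ⟨u, h⟩) else 0 with hqS'
    have hqSn : ∀ u, 0 ≤ qS u := by
      intro u; rw [hqS]; dsimp only; split
      · exact hc _
      · exact le_refl 0
    have hqS'n : ∀ u, 0 ≤ qS' u := by
      intro u; rw [hqS']; dsimp only; split
      · exact hc _
      · exact le_refl 0
    set A : Fin n → ℚ := ∑ u ∈ S, qS u • cQ u with hA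
    set B : Fin n → ℚ := ∑ u ∈ S', qS' u • cQ u with hB
    have hsum : ∑ j, c j • g j = A - B := by
      rw [Fintype.sum_sum_type]
      have e1 : ∑ a : {v // v ∈ S}, c (Sum.inl a) • g (Sum.inl a) = A := by
        rw [hA, ← attach_sum_eq S (fun a => c (Sum.inl a))]
        rfl
      have e2 : ∑ b : {v // v ∈ S'}, c (Sum.inr b) • g (Sum.inr b) = -B := by
        rw [hB, ← attach_sum_eq S' (fun b => c (Sum.inr b))]
        rw [← Finset.sum_neg_distrib]
        refine Finset.sum_congr rfl fun b _ => ?_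
        show c (Sum.inr b) • (-(cQ b.1)) = -(c (Sum.inr b) • cQ b.1)
        rw [smul_neg]
      rw [e1, e2]
      abel
    constructor
    · rintro a rfl
      -- -(cQ a) = A - B, so B = cQ a + A
      have heq : cQ a.1 + A = B := by
        have : -(cQ a.1) = A - B := by rw [← hsum]; exact hrep
        have := sub_eq_iff_eq_add.mp this.symm
        -- A - B = -cQ a → A = -cQ a + B
        rw [this]; abel
      set t : Fin n → ℚ := cQ a.1 + A with ht
      have htS : (fun k => ((t k : ℚ) : ℝ)) ∈ ratConeOf S := by
        refine ratCone_memQ S (fun u => (if u = a.1 then 1 else 0) + qS u)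
          (fun u => add_nonneg (by positivity) (hqSn u)) t ?_
        rw [ht]
        have : ∀ u ∈ S, ((if u = a.1 then (1:ℚ) else 0) + qS u) • cQ u
            = (if u = a.1 then (1:ℚ) else 0) • cQ u + qS u • cQ u := fun u _ => add_smul _ _ _
        rw [Finset.sum_congr rfl this, Finset.sum_add_distrib, sum_indicator_cQ a.2]
      have htS' : (fun k => ((t k : ℚ) : ℝ)) ∈ ratConeOf S' := by
        refine ratCone_memQ S' qS' (hqS'n) t ?_
        rw [heq]
      have htmem := Set.mem_inter htS htS'
      rw [hτ0] at htmem
      obtain ⟨htzero, -⟩ := htmem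
      -- split the zero sum
      have hAR : (fun k => ((A k : ℚ) : ℝ)) ∈ ratConeOf S := ratCone_memQ S qS hqSn A rfl
      have hsplit : ∑ k, m0 k * ((t k : ℚ) : ℝ)
          = (∑ k, m0 k * (cR a.1) k) + ∑ k, m0 k * ((A k : ℚ) : ℝ) := by
        rw [← Finset.sum_add_distrib]
        refine Finset.sum_congr rfl fun k _ => ?_
        rw [ht]
        show m0 k * ((cQ a.1 k + A k : ℚ) : ℝ) = m0 k * (cR a.1 k) + m0 k * ((A k : ℚ) : ℝ)
        push_cast [cQ, cR]
        ring
      have h1 : 0 ≤ ∑ k, m0 k * (cR a.1) k := hm0 (cR a.1) (gen_mem_ratConeOf a.2)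
      have h2 : 0 ≤ ∑ k, m0 k * ((A k : ℚ) : ℝ) := hm0 _ hAR
      have hzero : ∑ k, m0 k * (cR a.1) k = 0 := by
        have := htzero
        simp only [Set.mem_setOf_eq] at this
        rw [hsplit] at this
        linarith
      have : cR a.1 ∈ {x : Fin n → ℝ | ∑ k, m0 k * x k = 0} ∩ ratConeOf S :=
        ⟨hzero, gen_mem_ratConeOf a.2⟩
      rw [← hτ0] at this
      exact this
    · rintro b rfl
      -- cQ b = A - B, so A = cQ b + B
      have heq : cQ b.1 + B = A := by
        have h3 : -(g (Sum.inr b)) = A - B := by rw [← hsum]; exact hrep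
        have h4 : cQ b.1 = A - B := by
          rw [← h3]; show cQ b.1 = -(-(cQ b.1)); rw [neg_neg]
        rw [h4]
        abel
      set t : Fin n → ℚ := cQ b.1 + B with ht
      have htS' : (fun k => ((t k : ℚ) : ℝ)) ∈ ratConeOf S' := by
        refine ratCone_memQ S' (fun u => (if u = b.1 then 1 else 0) + qS' u)
          (fun u => add_nonneg (by positivity) (hqS'n u)) t ?_
        rw [ht]
        have : ∀ u ∈ S', ((if u = b.1 then (1:ℚ) else 0) + qS' u) • cQ u
            = (if u = b.1 then (1:ℚ) else 0) • cQ u + qS' u • cQ u := fun u _ => add_smul _ _ _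
        rw [Finset.sum_congr rfl this, Finset.sum_add_distrib, sum_indicator_cQ b.2]
      have htS : (fun k => ((t k : ℚ) : ℝ)) ∈ ratConeOf S := by
        refine ratCone_memQ S qS (hqSn) t ?_
        rw [heq]
      have htmem := Set.mem_inter htS htS'
      rw [hτ1] at htmem
      obtain ⟨htzero, -⟩ := htmem
      have hBR : (fun k => ((B k : ℚ) : ℝ)) ∈ ratConeOf S' := ratCone_memQ S' qS' hqS'n B rfl
      have hsplit : ∑ k, m1 k * ((t k : ℚ) : ℝ)
          = (∑ k, m1 k * (cR b.1) k) + ∑ k, m1 k * ((B k : ℚ) : ℝ) := by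
        rw [← Finset.sum_add_distrib]
        refine Finset.sum_congr rfl fun k _ => ?_
        rw [ht]
        show m1 k * ((cQ b.1 k + B k : ℚ) : ℝ) = m1 k * (cR b.1 k) + m1 k * ((B k : ℚ) : ℝ)
        push_cast [cQ, cR]
        ring
      have h1 : 0 ≤ ∑ k, m1 k * (cR b.1) k := hm1 (cR b.1) (gen_mem_ratConeOf b.2)
      have h2 : 0 ≤ ∑ k, m1 k * ((B k : ℚ) : ℝ) := hm1 _ hBR
      have hzero : ∑ k, m1 k * (cR b.1) k = 0 := by
        have := htzero
        simp only [Set.mem_setOf_eq] at this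
        rw [hsplit] at this
        linarith
      have : cR b.1 ∈ {x : Fin n → ℝ | ∑ k, m1 k * x k = 0} ∩ ratConeOf S' :=
        ⟨hzero, gen_mem_ratConeOf b.2⟩
      rw [← hτ1] at this
      exact this
  -- integer scaling
  obtain ⟨d, M, hd, hM⟩ := exists_int_scale Mq
  have hdq : (0:ℚ) < (d:ℚ) := by exact_mod_cast hd
  have hcast : ∀ v : Fin n → ℤ, ((zdot M v : ℤ) : ℚ) = d * qdot Mq (cQ v) := by
    intro v
    rw [zdot_cast_q]
    unfold qdot
    rw [Finset.mul_sum]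
    refine Finset.sum_congr rfl fun k _ => ?_
    show (M k : ℚ) * (cQ v k) = d * (Mq k * cQ v k)
    rw [hM k]; ring
  refine ⟨M, ?_, ?_⟩
  · intro v hv
    set i : ι := Sum.inl ⟨v, hv⟩ with hi
    have hgi : g i = cQ v := rfl
    by_cases hz : Zi i
    · right
      constructor
      · have : qdot Mq (cQ v) = 0 := by rw [← hgi]; exact hMqzero i hz
        have h5 : ((zdot M v : ℤ) : ℚ) = 0 := by rw [hcast, this, mul_zero]
        exact_mod_cast h5
      · exact (hZmem i hz).1 ⟨v, hv⟩ rfl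
    · left
      have : 0 < qdot Mq (cQ v) := by rw [← hgi]; exact hMqpos i hz
      have h5 : (0:ℚ) < ((zdot M v : ℤ) : ℚ) := by
        rw [hcast]; exact mul_pos hdq this
      exact_mod_cast h5
  · intro v hv
    set i : ι := Sum.inr ⟨v, hv⟩ with hi
    have hgi : g i = -(cQ v) := rfl
    by_cases hz : Zi i
    · right
      constructor
      · have h6 := hMqzero i hz
        rw [hgi, qdot_neg, neg_eq_zero] at h6
        have h5 : ((zdot M v : ℤ) : ℚ) = 0 := by rw [hcast, h6, mul_zero]
        exact_mod_cast h5
      · exact (hZmem i hz).2 ⟨v, hv⟩ rfl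
    · left
      have h6 := hMqpos i hz
      rw [hgi, qdot_neg] at h6
      have h7 : qdot Mq (cQ v) < 0 := by linarith
      have h5 : ((zdot M v : ℤ) : ℚ) < 0 := by
        rw [hcast]
        exact mul_neg_of_pos_of_neg hdq h7
      exact_mod_cast h5
lemma zdot_add_left {n : ℕ} (u u' v : Fin n → ℤ) :
    zdot (u + u') v = zdot u v + zdot u' v := by
  simp [zdot, add_mul, Finset.sum_add_distrib]

lemma zdot_smul_left {n : ℕ} (P : ℤ) (u v : Fin n → ℤ) :
    zdot (P • u) v = P * zdot u v := by
  simp only [zdot, Pi.smul_apply, smul_eq_mul, Finset.mul_sum]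
  exact Finset.sum_congr rfl fun i _ => by ring

/-- If rational polyhedral cones `σ`, `σ'` meet in the common face `τ = σ ∩ σ'`,
then `S_τ = S_σ + S_{σ'}`. -/
theorem latticeDual_of_common_face {n : ℕ} (S S' : Finset (Fin n → ℤ))
    (hface : IsFaceOf' (ratConeOf S ∩ ratConeOf S') (ratConeOf S))
    (hface' : IsFaceOf' (ratConeOf S ∩ ratConeOf S') (ratConeOf S')) :
    latticeDual (ratConeOf S ∩ ratConeOf S') =
      {w : Fin n → ℤ | ∃ a ∈ latticeDual (ratConeOf S),
        ∃ b ∈ latticeDual (ratConeOf S'), w = a + b} := by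
  classical
  obtain ⟨M, hMS, hMS'⟩ := exists_M S S' hface hface'
  ext w
  simp only [Set.mem_setOf_eq]
  constructor
  · intro hw
    set P : ℤ := ∑ v ∈ S, |zdot w v| with hP
    have hP0 : 0 ≤ P := Finset.sum_nonneg fun v _ => abs_nonneg _
    have hPge : ∀ v ∈ S, -zdot w v ≤ P := by
      intro v hv
      calc -zdot w v ≤ |zdot w v| := neg_le_abs _
        _ ≤ P := Finset.single_le_sum (f := fun v => |zdot w v|)
            (fun u _ => abs_nonneg _) hv
    refine ⟨w + P • M, ?_, (-P) • M, ?_, ?_⟩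
    · apply mem_latticeDual_of_gens
      intro v hv
      rw [zdot_add_left, zdot_smul_left]
      rcases hMS v hv with hpos | ⟨hz, hmem⟩
      · have h1 : 1 ≤ zdot M v := hpos
        have h2 : P * 1 ≤ P * zdot M v := mul_le_mul_of_nonneg_left h1 hP0
        have h3 := hPge v hv
        linarith
      · have h4 := hw _ hmem
        have h5 : (0:ℝ) ≤ ((zdot w v : ℤ) : ℝ) := by
          rw [zdot_cast_r]; exact h4
        have h6 : 0 ≤ zdot w v := by exact_mod_cast h5
        rw [hz, mul_zero]
        linarith
    · apply mem_latticeDual_of_gens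
      intro v hv
      rw [zdot_smul_left]
      rcases hMS' v hv with hneg | ⟨hz, -⟩
      · have h1 : zdot M v ≤ -1 := by omega
        nlinarith
      · rw [hz, mul_zero]
    · rw [add_assoc, ← add_smul, add_neg_cancel, zero_smul, add_zero]
  · rintro ⟨a, ha, b, hb, rfl⟩
    intro x hx
    have hxa := ha x hx.1
    have hxb := hb x hx.2
    have hs : ∑ i, (((a + b) i : ℤ) : ℝ) * x i
        = (∑ i, (a i : ℝ) * x i) + ∑ i, (b i : ℝ) * x i := by
      rw [← Finset.sum_add_distrib]
      refine Finset.sum_congr rfl fun i _ => ?_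
      show (((a i + b i : ℤ)) : ℝ) * x i = (a i : ℝ) * x i + (b i : ℝ) * x i
      push_cast
      ring
    rw [hs]
    linarith
end

section
/- Birch's Theorem (irrational version): for a finite set 𝒜 = {a₁,...,aₘ} ⊂ ℝⁿ, the map p ↦ Σᵢ pᵢ aᵢ restricts to a bijection (in fact a homeomorphism) from the irrational affine toric variety X_𝒜 ⊆ ℝ≥0^𝒜 onto cone(𝒜). -/
open Real

/-- The irrational affine toric variety `X_𝒜`: the closure in `ℝ≥0^𝒜` of the image of the
positive torus under the monomial map `v ↦ (exp(−⟨aᵢ, v⟩))ᵢ`. -/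
noncomputable def toricX {n m : ℕ} (A : Fin m → (Fin n → ℝ)) : Set (Fin m → ℝ) :=
  closure (Set.range fun v : Fin n → ℝ => fun i => Real.exp (-(∑ j, A i j * v j)))

/-- The cone generated by `𝒜 = {a₁, …, aₘ}`. -/
def coneOfFam {n m : ℕ} (A : Fin m → (Fin n → ℝ)) : Set (Fin n → ℝ) :=
  {x | ∃ c : Fin m → ℝ, (∀ i, 0 ≤ c i) ∧ x = ∑ i, c i • A i}

/-!
Write `L p = p ᵥ* A` for the moment map and `H p = ∑ (pᵢ - pᵢ log pᵢ)` for the entropy. For a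
torus point `e = exp (-A v)`, Gibbs' inequality gives `H q ≤ ∑ (eᵢ - qᵢ log eᵢ) = ∑ eᵢ + ⟨L q, v⟩`,
which depends on `q` only through `L q`; letting `e` tend to `x ∈ X_𝒜` shows that every point of
`X_𝒜` maximizes `H` on its fiber of `L`. Strict concavity of `H` makes `L` injective on `X_𝒜`.
Since `H` strictly increases when coordinates `≥ 1` decrease, points of `X_𝒜` cannot escape to
infinity along a direction `u ≥ 0` with `L u = 0`, so `L` is proper on `X_𝒜`, hence a closed
embedding. Finally, for `p > 0` a minimizer of the coercive function
`v ↦ ∑ (exp (-(A v)ᵢ) + pᵢ (A v)ᵢ)` is a torus point with moment `L p`; such moments are dense in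
`cone(𝒜)`, and `L '' X_𝒜` is closed, so it is all of `cone(𝒜)`.
-/

open Set Filter Topology Matrix Bornology

namespace Birch

section Entropy

variable {ι : Type*} [Fintype ι]

noncomputable def entropy (p : ι → ℝ) : ℝ := ∑ i, (p i + negMulLog (p i))

noncomputable def crossEntropy (q p : ι → ℝ) : ℝ := ∑ i, (p i - q i * log (p i))

lemma add_negMulLog_lt {p q : ℝ} (hq : 0 ≤ q) (hp : 0 < p) (hqp : q ≠ p) :
    q + negMulLog q < p - q * log p := by
  rcases hq.eq_or_lt with rfl | hq
  · simpa using hp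
  have hlog : log (p / q) < p / q - 1 :=
    log_lt_sub_one_of_pos (by positivity) (by rwa [Ne, div_eq_one_iff_eq hq.ne', eq_comm])
  rw [log_div hp.ne' hq.ne', lt_sub_iff_add_lt, ← mul_lt_mul_iff_right₀ hq,
    mul_div_cancel₀ _ hq.ne'] at hlog
  rw [negMulLog]
  linarith

lemma add_negMulLog_le {p q : ℝ} (hq : 0 ≤ q) (hp : 0 < p) :
    q + negMulLog q ≤ p - q * log p := by
  rcases eq_or_ne q p with rfl | hqp
  · simp [negMulLog, sub_eq_add_neg]
  · exact (add_negMulLog_lt hq hp hqp).le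

lemma strictAntiOn_add_negMulLog : StrictAntiOn (fun t => t + negMulLog t) (Ici 1) := by
  intro s hs t _ hst
  have hs : 1 ≤ s := hs
  calc t + negMulLog t < s - t * log s := add_negMulLog_lt (by linarith) (by linarith) hst.ne'
    _ ≤ s - s * log s := by nlinarith [log_nonneg hs]
    _ = s + negMulLog s := by rw [negMulLog]; ring

lemma entropy_le_crossEntropy {q p : ι → ℝ} (hq : 0 ≤ q) (hp : ∀ i, 0 < p i) :
    entropy q ≤ crossEntropy q p :=
  Finset.sum_le_sum fun i _ => add_negMulLog_le (hq i) (hp i)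

lemma crossEntropy_self (p : ι → ℝ) : crossEntropy p p = entropy p := by
  simp only [crossEntropy, entropy, negMulLog, neg_mul, sub_eq_add_neg]

lemma continuousAt_crossEntropy_self (p : ι → ℝ) : ContinuousAt (crossEntropy p) p := by
  refine tendsto_finsetSum _ fun i _ => ((continuous_apply i).tendsto p).sub ?_
  by_cases hpi : p i = 0
  · simp only [hpi, zero_mul]
    exact tendsto_const_nhds
  · exact (((continuous_apply i).continuousAt (x := p)).log hpi).const_mul (p i)

lemma strictConcaveOn_entropy : StrictConcaveOn ℝ (Ici (0 : ι → ℝ)) entropy := by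
  have hterm : StrictConcaveOn ℝ (Ici (0 : ℝ)) fun t => t + negMulLog t :=
    (concaveOn_id (convex_Ici 0)).add_strictConcaveOn strictConcaveOn_negMulLog
  refine ⟨convex_Ici 0, fun x hx y hy hxy a b ha hb hab => ?_⟩
  obtain ⟨i, hi⟩ := Function.ne_iff.1 hxy
  simp only [entropy, Finset.smul_sum, ← Finset.sum_add_distrib, Pi.add_apply, Pi.smul_apply]
  exact Finset.sum_lt_sum (fun j _ => hterm.concaveOn.2 (hx j) (hy j) ha.le hb.le hab)
    ⟨i, Finset.mem_univ i, hterm.2 (hx i) (hy i) hi ha hb hab⟩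

end Entropy

section Potential

variable {ι : Type*} [Fintype ι]

noncomputable def potential (p s : ι → ℝ) : ℝ := ∑ i, (exp (-s i) + p i * s i)

lemma exists_sub_le_exp_neg_add_mul {p : ℝ} (hp : 0 < p) :
    ∃ K, ∀ s, p * |s| - K ≤ exp (-s) + p * s := by
  refine ⟨|2 * p * (1 - log (2 * p))|, fun s => ?_⟩
  have hK := neg_abs_le (2 * p * (1 - log (2 * p)))
  have hK₀ := abs_nonneg (2 * p * (1 - log (2 * p)))
  rcases le_or_gt 0 s with hs | hs
  · rw [abs_of_nonneg hs]
    linarith [exp_pos (-s)]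
  · -- the tangent line of `exp` at `log (2 * p)`
    have htangent := add_one_le_exp (-s - log (2 * p))
    rw [exp_sub, exp_log (by positivity), le_div_iff₀ (by positivity)] at htangent
    have : (-s - log (2 * p) + 1) * (2 * p) = 2 * p * (1 - log (2 * p)) - 2 * p * s := by ring
    rw [abs_of_neg hs]
    linarith

lemma isBounded_setOf_potential_le {p : ι → ℝ} (hp : ∀ i, 0 < p i) (C : ℝ) :
    IsBounded {s | potential p s ≤ C} := by
  choose K hK using fun i => exists_sub_le_exp_neg_add_mul (hp i)
  set R : ι → ℝ := fun i => (C + ∑ j, K j) / p i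
  refine (Metric.isBounded_Icc (-R) R).subset fun s hs => ?_
  have hsum : ∀ i, p i * |s i| ≤ C + ∑ j, K j := fun i => by
    have h₁ : ∑ j, (p j * |s j| - K j) ≤ C :=
      (Finset.sum_le_sum fun j _ => hK j (s j)).trans hs
    have h₂ : p i * |s i| ≤ ∑ j, p j * |s j| :=
      Finset.single_le_sum (fun j _ => mul_nonneg (hp j).le (abs_nonneg _)) (Finset.mem_univ i)
    rw [Finset.sum_sub_distrib] at h₁
    linarith
  have hR : ∀ i, |s i| ≤ R i := fun i => by
    rw [le_div_iff₀ (hp i), mul_comm]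
    exact hsum i
  exact ⟨fun i => neg_le_of_abs_le (hR i), fun i => le_of_abs_le (hR i)⟩

end Potential

section LinearMaps

variable {ι κ : Type*} [Fintype ι] [Fintype κ] (A : Matrix ι κ ℝ)

lemma exists_recession_direction_of_not_isBounded {S : Set (ι → ℝ)}
    (hS₀ : S ⊆ Ici 0) (hSA : IsBounded ((· ᵥ* A) '' S)) (hS : ¬IsBounded S) :
    ∃ u, 0 ≤ u ∧ ‖u‖ = 1 ∧ u ᵥ* A = 0 ∧ ∀ C, ∃ x ∈ S, ∀ i, 0 < u i → C ≤ x i := by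
  simp only [isBounded_iff_forall_norm_le, not_exists, not_forall, not_le, exists_prop] at hS
  obtain ⟨D, hD⟩ := isBounded_iff_forall_norm_le.1 hSA
  choose x hxS hx using fun k : ℕ => hS k
  have hx₀ : ∀ k, x k ≠ 0 := fun k => norm_pos_iff.1 ((Nat.cast_nonneg k).trans_lt (hx k))
  have hnorm : Tendsto (fun k => ‖x k‖) atTop atTop :=
    tendsto_atTop_mono (fun k => (hx k).le) tendsto_natCast_atTop_atTop
  set w : ℕ → ι → ℝ := fun k => ‖x k‖⁻¹ • x k
  have hw : ∀ k, w k ∈ Metric.sphere 0 1 ∩ Ici 0 := fun k =>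
    ⟨by simp [w, norm_smul, hx₀ k],
      mem_Ici.2 (smul_nonneg (inv_nonneg.2 (norm_nonneg _)) (hS₀ (hxS k)))⟩
  obtain ⟨u, ⟨hu₁, hu₀⟩, φ, hφ, hwu⟩ :=
    ((isCompact_sphere (0 : ι → ℝ) 1).inter_right isClosed_Ici).tendsto_subseq hw
  have hnormφ := hnorm.comp hφ.tendsto_atTop
  refine ⟨u, hu₀, by simpa using hu₁, ?_, fun C => ?_⟩
  · have hA : Continuous fun y : ι → ℝ => y ᵥ* A := by fun_prop
    refine tendsto_nhds_unique ((hA.tendsto u).comp hwu) ?_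
    have : (fun y => y ᵥ* A) ∘ w ∘ φ = fun k => ‖x (φ k)‖⁻¹ • (x (φ k) ᵥ* A) := by
      funext k; exact smul_vecMul _ _ _
    rw [this]
    refine (tendsto_inv_atTop_zero.comp hnormφ).zero_smul_isBoundedUnder_le ?_
    exact isBoundedUnder_of ⟨D, fun k => hD _ (mem_image_of_mem _ (hxS _))⟩
  · have hfar : ∀ i, 0 < u i → Tendsto (fun k => x (φ k) i) atTop atTop := fun i hi => by
      have := hnormφ.atTop_mul_pos hi ((continuous_apply i).tendsto u |>.comp hwu)
      simpa [Function.comp_def, w, hx₀] using this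
    have hev : ∀ᶠ k in atTop, ∀ i, 0 < u i → C ≤ x (φ k) i := by
      refine eventually_all.2 fun i => ?_
      by_cases hi : 0 < u i
      · exact (hfar i hi).eventually_ge_atTop C |>.mono fun k hk _ => hk
      · exact Eventually.of_forall fun k h => absurd h hi
    obtain ⟨k, hk⟩ := hev.exists
    exact ⟨x (φ k), hxS _, hk⟩

lemma exists_forall_le_comp_mulVec {f : (ι → ℝ) → ℝ} (hf : Continuous f)
    (hbdd : ∀ C, IsBounded {s | f s ≤ C}) : ∃ v, ∀ w, f (A *ᵥ v) ≤ f (A *ᵥ w) := by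
  have hrange : IsClosed (range (A *ᵥ ·)) := by
    have := (LinearMap.range (mulVecLin A)).closed_of_finiteDimensional
    rwa [LinearMap.coe_range, coe_mulVecLin] at this
  have h₀ : A *ᵥ 0 ∈ range (A *ᵥ ·) ∩ {s | f s ≤ f 0} := ⟨mem_range_self 0, by simp⟩
  obtain ⟨s, ⟨⟨v, rfl⟩, -⟩, hmin⟩ :=
    (Metric.isCompact_of_isClosed_isBounded (hrange.inter (isClosed_le hf continuous_const))
      ((hbdd _).subset inter_subset_right)).exists_isMinOn ⟨_, h₀⟩ hf.continuousOn
  refine ⟨v, fun w => ?_⟩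
  rcases le_or_gt (f (A *ᵥ w)) (f 0) with hw | hw
  · exact hmin ⟨mem_range_self w, hw⟩
  · exact (hmin h₀).trans (by simpa using hw.le)

end LinearMaps

section Torus

variable {ι κ : Type*} [Fintype κ] (A : Matrix ι κ ℝ)

noncomputable def torusPoint (v : κ → ℝ) : ι → ℝ := fun i => exp (-(A *ᵥ v) i)

lemma torusPoint_pos (v : κ → ℝ) (i : ι) : 0 < torusPoint A v i := exp_pos _

noncomputable def toricVariety : Set (ι → ℝ) := closure (range (torusPoint A))

lemma isClosed_toricVariety : IsClosed (toricVariety A) := isClosed_closure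

lemma toricVariety_subset_Ici : toricVariety A ⊆ Ici 0 :=
  closure_minimal (range_subset_iff.2 fun v i => (torusPoint_pos A v i).le) isClosed_Ici

lemma crossEntropy_torusPoint [Fintype ι] (q : ι → ℝ) (v : κ → ℝ) :
    crossEntropy q (torusPoint A v) = ∑ i, torusPoint A v i + (q ᵥ* A) ⬝ᵥ v := by
  rw [← dotProduct_mulVec]
  simp only [crossEntropy, torusPoint, log_exp, dotProduct, mul_neg, sub_neg_eq_add,
    Finset.sum_add_distrib]

lemma vecMul_torusPoint_eq_of_forall_potential_le [Fintype ι] {p : ι → ℝ} {v : κ → ℝ}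
    (hv : ∀ w, potential p (A *ᵥ v) ≤ potential p (A *ᵥ w)) :
    torusPoint A v ᵥ* A = p ᵥ* A := by
  set d := (p - torusPoint A v) ᵥ* A
  have hderiv : HasDerivAt (fun t : ℝ => potential p (A *ᵥ (v + t • d))) (d ⬝ᵥ d) 0 := by
    have hline : ∀ i, HasDerivAt (fun t : ℝ => (A *ᵥ (v + t • d)) i) ((A *ᵥ d) i) 0 :=
      fun i => by
      simp only [mulVec_add, mulVec_smul, Pi.add_apply, Pi.smul_apply, smul_eq_mul]
      simpa using ((hasDerivAt_id (0 : ℝ)).mul_const ((A *ᵥ d) i)).const_add ((A *ᵥ v) i)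
    have h : HasDerivAt (fun t : ℝ => potential p (A *ᵥ (v + t • d)))
        (∑ i, (exp (-(A *ᵥ (v + (0 : ℝ) • d)) i) * -(A *ᵥ d) i + p i * (A *ᵥ d) i)) 0 :=
      HasDerivAt.fun_sum fun i _ => (hline i).neg.exp.add ((hline i).const_mul (p i))
    convert h using 1
    change ((p - torusPoint A v) ᵥ* A) ⬝ᵥ d = _
    rw [← dotProduct_mulVec]
    simp only [dotProduct, torusPoint, Pi.sub_apply, zero_smul, add_zero]
    exact Finset.sum_congr rfl fun i _ => by ring
  have hmin : IsLocalMin (fun t : ℝ => potential p (A *ᵥ (v + t • d))) 0 :=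
    Eventually.of_forall fun t => by simpa using hv (v + t • d)
  have hd : (p - torusPoint A v) ᵥ* A = 0 :=
    dotProduct_self_eq_zero.1 (hmin.hasDerivAt_eq_zero hderiv)
  rwa [sub_vecMul, sub_eq_zero, eq_comm] at hd

lemma exists_torusPoint_vecMul_eq [Fintype ι] {p : ι → ℝ} (hp : ∀ i, 0 < p i) :
    ∃ v, torusPoint A v ᵥ* A = p ᵥ* A := by
  obtain ⟨v, hv⟩ := exists_forall_le_comp_mulVec A
    (continuous_finsetSum _ fun i _ => ((continuous_apply i).neg.rexp).add
      (continuous_const.mul (continuous_apply i))) (isBounded_setOf_potential_le hp)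
  exact ⟨v, vecMul_torusPoint_eq_of_forall_potential_le A hv⟩

end Torus

section ToricVariety

variable {ι κ : Type*} [Fintype ι] [Fintype κ] (A : Matrix ι κ ℝ)

lemma entropy_le_of_mem_toricVariety {x q : ι → ℝ} (hx : x ∈ toricVariety A) (hq : 0 ≤ q)
    (hqx : q ᵥ* A = x ᵥ* A) : entropy q ≤ entropy x := by
  rw [toricVariety, mem_closure_iff_nhdsWithin_neBot] at hx
  rw [← crossEntropy_self x]
  refine ge_of_tendsto ((continuousAt_crossEntropy_self x).mono_left
    (nhdsWithin_le_nhds (s := range (torusPoint A)))) ?_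
  filter_upwards [self_mem_nhdsWithin] with p hp
  obtain ⟨v, rfl⟩ := hp
  calc entropy q ≤ crossEntropy q (torusPoint A v) :=
        entropy_le_crossEntropy hq (torusPoint_pos A v)
    _ = crossEntropy x (torusPoint A v) := by
        rw [crossEntropy_torusPoint, crossEntropy_torusPoint, hqx]

lemma injOn_vecMul_toricVariety : InjOn (· ᵥ* A) (toricVariety A) := by
  intro x hx y hy hxy
  set F := Ici 0 ∩ (· ᵥ* A) ⁻¹' {x ᵥ* A}
  have hF : Convex ℝ F :=
    (convex_Ici 0).inter ((convex_singleton _).linear_preimage (vecMulLinear A))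
  exact (strictConcaveOn_entropy.subset inter_subset_left hF).eq_of_isMaxOn
    (fun q hq => entropy_le_of_mem_toricVariety A hx hq.1 hq.2)
    (fun q hq => entropy_le_of_mem_toricVariety A hy hq.1 (hq.2.trans hxy))
    ⟨toricVariety_subset_Ici A hx, rfl⟩ ⟨toricVariety_subset_Ici A hy, hxy.symm⟩

lemma isBounded_toricVariety_inter_preimage {K : Set (κ → ℝ)} (hK : IsBounded K) :
    IsBounded (toricVariety A ∩ (· ᵥ* A) ⁻¹' K) := by
  by_contra hunb
  obtain ⟨u, hu₀, hu₁, huA, hfar⟩ := exists_recession_direction_of_not_isBounded A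
    (inter_subset_left.trans (toricVariety_subset_Ici A))
    (hK.subset ((image_mono inter_subset_right).trans (image_preimage_subset _ _))) hunb
  obtain ⟨x, ⟨hx, -⟩, hxu⟩ := hfar 2
  obtain ⟨i, hi⟩ : ∃ i, 0 < u i := by
    by_contra! h
    have : u = 0 := funext fun i => le_antisymm (h i) (hu₀ i)
    simp [this] at hu₁
  have hu_le : ∀ j, u j ≤ 1 := fun j => hu₁ ▸ (le_abs_self _).trans (norm_le_pi_norm u j)
  -- moving `x` back along the recession direction `u` strictly increases the entropy
  have hterm : ∀ j, 0 < u j →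
      x j + negMulLog (x j) < (x - u) j + negMulLog ((x - u) j) := fun j hj =>
    strictAntiOn_add_negMulLog (mem_Ici.2 (by simp; linarith [hxu j hj, hu_le j]))
      (mem_Ici.2 (by linarith [hxu j hj])) (by simpa using hj)
  refine (entropy_le_of_mem_toricVariety A hx (q := x - u) (fun j => ?_) ?_).not_gt ?_
  · rcases (hu₀ j).eq_or_lt with h | h
    · simpa [← h] using toricVariety_subset_Ici A hx j
    · simp; linarith [hxu j h, hu_le j]
  · rw [sub_vecMul, huA, sub_zero]
  · refine Finset.sum_lt_sum (fun j _ => ?_) ⟨i, Finset.mem_univ i, hterm i hi⟩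
    rcases (hu₀ j).eq_or_lt with h | h
    · simp [← h]
    · exact (hterm j h).le

lemma isClosedEmbedding_vecMul_toricVariety :
    IsClosedEmbedding fun x : toricVariety A => (x : ι → ℝ) ᵥ* A := by
  have hA : Continuous fun x : ι → ℝ => x ᵥ* A := by fun_prop
  have hcont : Continuous fun x : toricVariety A => (x : ι → ℝ) ᵥ* A := by fun_prop
  refine .of_continuous_injective_isClosedMap hcont
    (fun x y h => Subtype.ext (injOn_vecMul_toricVariety A x.2 y.2 h)) ?_
  refine (isProperMap_iff_isCompact_preimage.2 ⟨hcont, fun K hK => ?_⟩).isClosedMap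
  have hcpt : IsCompact (toricVariety A ∩ (· ᵥ* A) ⁻¹' K) :=
    Metric.isCompact_of_isClosed_isBounded
      ((isClosed_toricVariety A).inter (hK.isClosed.preimage hA))
      (isBounded_toricVariety_inter_preimage A hK.isBounded)
  have := (isClosed_toricVariety A).isClosedEmbedding_subtypeVal.isCompact_preimage hcpt
  rwa [Subtype.preimage_coe_self_inter] at this

lemma vecMul_image_toricVariety : (· ᵥ* A) '' toricVariety A = (· ᵥ* A) '' Ici 0 := by
  refine (image_mono (toricVariety_subset_Ici A)).antisymm ?_
  have hA : Continuous fun x : ι → ℝ => x ᵥ* A := by fun_prop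
  have hclosed : IsClosed ((· ᵥ* A) '' toricVariety A) := by
    rw [image_eq_range]
    exact (isClosedEmbedding_vecMul_toricVariety A).isClosed_range
  have hpos : (· ᵥ* A) '' univ.pi (fun _ => Ioi 0) ⊆ (· ᵥ* A) '' toricVariety A := by
    rintro _ ⟨p, hp, rfl⟩
    obtain ⟨v, hv⟩ := exists_torusPoint_vecMul_eq A fun i => hp i (mem_univ i)
    exact ⟨torusPoint A v, subset_closure (mem_range_self v), hv⟩
  calc (· ᵥ* A) '' Ici 0 = (· ᵥ* A) '' closure (univ.pi fun _ => Ioi 0) := by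
        rw [closure_pi_set, closure_Ioi, pi_univ_Ici]; rfl
    _ ⊆ closure ((· ᵥ* A) '' univ.pi fun _ => Ioi 0) := image_closure_subset_closure_image hA
    _ ⊆ (· ᵥ* A) '' toricVariety A := closure_minimal hpos hclosed

end ToricVariety

lemma toricX_eq_toricVariety {m n : ℕ} (A : Fin m → Fin n → ℝ) :
    toricX A = toricVariety (of A) := rfl

lemma coneOfFam_eq_image {m n : ℕ} (A : Fin m → Fin n → ℝ) :
    coneOfFam A = (· ᵥ* of A) '' Ici 0 := by
  ext y
  constructor <;> rintro ⟨c, hc, rfl⟩ <;> exact ⟨c, hc, vecMul_eq_sum c (of A)⟩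

end Birch

open Birch in
/-- Birch's theorem (irrational version): the map `p ↦ Σᵢ pᵢ aᵢ` restricts to a bijection,
in fact a homeomorphism, from `X_𝒜` onto `cone(𝒜)`. -/
theorem birch {n m : ℕ} (A : Fin m → (Fin n → ℝ)) :
    Set.BijOn (fun p : Fin m → ℝ => ∑ i, p i • A i) (toricX A) (coneOfFam A) ∧
      ∃ h : toricX A ≃ₜ coneOfFam A,
        ∀ p : toricX A, (h p : Fin n → ℝ) = ∑ i, (p : Fin m → ℝ) i • A i := by
  have hL : (fun p : Fin m → ℝ => ∑ i, p i • A i) = (· ᵥ* of A) :=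
    funext fun p => (vecMul_eq_sum p (of A)).symm
  have hcone : (· ᵥ* of A) '' toricVariety (of A) = coneOfFam A := by
    rw [vecMul_image_toricVariety, coneOfFam_eq_image]
  rw [toricX_eq_toricVariety, hL, ← hcone]
  exact ⟨(injOn_vecMul_toricVariety _).bijOn_image,
    (isClosedEmbedding_vecMul_toricVariety _).isEmbedding.toHomeomorph.trans
      (.setCongr (image_eq_range (· ᵥ* of A) _).symm),
    fun p => vecMul_eq_sum (p : Fin m → ℝ) (of A)⟩
end

section
/- For a finite set 𝒜 ⊂ M, the irrational affine toric variety X_𝒜 equals the binomial variety 𝒵_𝒜 = {z ∈ ℝ≥0^𝒜 : z^u = z^v whenever u, v ∈ ℝ≥0^𝒜 satisfy 𝒜u = 𝒜v}. -/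
open Real

/-- The binomial variety `𝒵_𝒜 ⊆ ℝ≥0^𝒜`: nonnegative points `z` with `z^u = z^v`
whenever `u, v ∈ ℝ≥0^𝒜` satisfy `𝒜u = 𝒜v` (powers are `Real.rpow`, so `0^0 = 1`). -/
def binomialZ {n m : ℕ} (A : Fin m → (Fin n → ℝ)) : Set (Fin m → ℝ) :=
  {z | (∀ i, 0 ≤ z i) ∧ ∀ u v : Fin m → ℝ, (∀ i, 0 ≤ u i) → (∀ i, 0 ≤ v i) →
    (∑ i, u i • A i) = (∑ i, v i • A i) →
    (∏ i, (z i) ^ (u i)) = ∏ i, (z i) ^ (v i)}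

/-!
A monomial `z = exp (-(A v))` satisfies `z ^ u = exp (-⟨u A, v⟩)`, so the torus image, and hence
its closure, lies in the closed set `binomialZ A`.

Conversely, let `z ∈ binomialZ A` have support `S`. Writing `u = u⁺ - u⁻`, the binomial relations
say that `log z` is orthogonal to every linear relation `u A = 0` among the rows indexed by `S`,
so `log z = -(A x)` on `S` for some `x`. They also say that no nonzero nonnegative combination of
the rows outside `S` lies in the span of the rows in `S`: its monomial would vanish while the
other side stays positive. Separating the corresponding face of the simplex from that span gives
`w` with `A w = 0` on `S` and `A w > 0` off `S`, and then the monomials at `x + t w` tend to `z`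
as `t → ∞`.
-/

open Matrix Function Set Filter Topology

section

variable {ι κ : Type*}

theorem support_posPart_subset (u : ι → ℝ) : support u⁺ ⊆ support u :=
  fun i hi h0 => hi (by change (u i)⁺ = 0; rw [h0, posPart_zero])

theorem support_negPart_subset (u : ι → ℝ) : support u⁻ ⊆ support u :=
  fun i hi h0 => hi (by change (u i)⁻ = 0; rw [h0, negPart_zero])

theorem prod_exp_neg_mulVec_rpow [Fintype ι] [Fintype κ] (A : Matrix ι κ ℝ) (v : κ → ℝ)
    (u : ι → ℝ) : ∏ i, exp (-(A *ᵥ v) i) ^ u i = exp (-(u ᵥ* A ⬝ᵥ v)) := by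
  simp_rw [← exp_mul, ← exp_sum, ← dotProduct_mulVec, dotProduct, neg_mul,
    Finset.sum_neg_distrib, mul_comm]

theorem prod_rpow_eq_exp_dotProduct_log [Fintype ι] {z u : ι → ℝ} (hz : 0 ≤ z)
    (hu : support u ⊆ support z) : ∏ i, z i ^ u i = exp (u ⬝ᵥ fun i => log (z i)) := by
  rw [dotProduct, exp_sum]
  refine Finset.prod_congr rfl fun i _ => ?_
  by_cases hi : u i = 0
  · simp [hi]
  · rw [rpow_def_of_pos ((hz i).lt_of_ne' (hu hi)), mul_comm]

theorem exists_mulVec_eq_of_forall_vecMul_eq_zero [Fintype ι] [Fintype κ] {K : Type*} [Field K]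
    (B : Matrix ι κ K) (c : ι → K) (h : ∀ u, u ᵥ* B = 0 → u ⬝ᵥ c = 0) : ∃ x, B *ᵥ x = c := by
  classical
  obtain ⟨φ, hφ⟩ : dotProductEquiv K ι c ∈ LinearMap.range B.vecMulLinear.dualMap := by
    rw [LinearMap.range_dualMap_eq_dualAnnihilator_ker, Submodule.mem_dualAnnihilator]
    intro u hu
    simpa [dotProduct_comm] using h u hu
  obtain ⟨x, rfl⟩ := (dotProductEquiv K κ).surjective φ
  refine ⟨x, funext fun i => ?_⟩
  have hrow := LinearMap.congr_fun hφ (Pi.single i 1)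
  simp only [LinearMap.dualMap_apply, vecMulLinear_apply, single_one_vecMul,
    dotProductEquiv_apply_apply, dotProduct_single, mul_one] at hrow
  rw [← hrow, mulVec, dotProduct_comm]
  rfl

theorem exists_mulVec_eq_on_of_forall_vecMul_eq_zero [Fintype ι] [Fintype κ] {K : Type*} [Field K]
    (A : Matrix ι κ K) (S : Set ι) (c : ι → K) (h : ∀ u, support u ⊆ S → u ᵥ* A = 0 → u ⬝ᵥ c = 0) :
    ∃ x, ∀ i ∈ S, (A *ᵥ x) i = c i := by
  classical
  -- `diagonal d * A` is `A` with the rows outside `S` replaced by zero.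
  set d : ι → K := S.indicator 1 with hd
  obtain ⟨x, hx⟩ := exists_mulVec_eq_of_forall_vecMul_eq_zero (diagonal d * A) (d * c)
    fun u hu => by
      rw [← vecMul_vecMul, show u ᵥ* diagonal d = u * d from funext (vecMul_diagonal u d)] at hu
      have hsupp : support (u * d) ⊆ S :=
        (support_mul_subset_right _ _).trans support_indicator_subset
      simpa only [dotProduct, Pi.mul_apply, mul_assoc] using h _ hsupp hu
  refine ⟨x, fun i hi => ?_⟩
  have := congr_fun hx i
  rw [← mulVec_mulVec, mulVec_diagonal, Pi.mul_apply] at this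
  simpa [hd, hi] using this

theorem geometric_hahn_banach_compact_submodule {E : Type*} [TopologicalSpace E]
    [AddCommGroup E] [Module ℝ E] [IsTopologicalAddGroup E] [ContinuousSMul ℝ E]
    [LocallyConvexSpace ℝ E] {K : Set E} (hKconv : Convex ℝ K) (hKcomp : IsCompact K)
    (L : Submodule ℝ E) (hL : IsClosed (L : Set E)) (hKL : Disjoint K L) :
    ∃ f : StrongDual ℝ E, (∀ x ∈ L, f x = 0) ∧ ∀ x ∈ K, f x < 0 := by
  obtain ⟨f, hfL, hfK⟩ :=
    ProperCone.hyperplane_separation ⟨PointedCone.ofSubmodule L, hL⟩ hKconv hKcomp hKL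
  refine ⟨f, fun x hx => le_antisymm ?_ (hfL x hx), hfK⟩
  simpa using hfL (-x) (L.neg_mem hx)

theorem exists_mulVec_eq_zero_on_pos_off [Fintype ι] [Fintype κ] (A : Matrix ι κ ℝ) (S : Set ι)
    (h : ∀ u μ : ι → ℝ, 0 ≤ u → (∀ i ∈ S, u i = 0) → support μ ⊆ S → u ᵥ* A = μ ᵥ* A → u = 0) :
    ∃ w, (∀ i ∈ S, (A *ᵥ w) i = 0) ∧ ∀ i ∉ S, 0 < (A *ᵥ w) i := by
  classical
  set Δ : Set (ι → ℝ) := stdSimplex ℝ ι ∩ ⋂ i ∈ S, {u | u i = 0}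
  have hΔconv : Convex ℝ Δ := (convex_stdSimplex ℝ ι).inter
    (convex_iInter₂ fun i _ => convex_hyperplane (LinearMap.proj i).isLinear 0)
  have hΔcomp : IsCompact Δ := (isCompact_stdSimplex ℝ ι).inter_right
    (isClosed_biInter fun i _ => isClosed_eq (continuous_apply i) continuous_const)
  set L := Submodule.span ℝ (A.row '' S)
  have hdisj : Disjoint (A.vecMulLinear '' Δ) L := by
    refine Set.disjoint_left.2 ?_
    rintro _ ⟨u, ⟨hu, hu₀⟩, rfl⟩ huL
    obtain ⟨μ, hμS, hμ⟩ := (Finsupp.mem_span_image_iff_linearCombination ℝ).1 huL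
    have hμA : u ᵥ* A = μ ᵥ* A := by
      rw [← vecMulLinear_apply, ← hμ, Finsupp.linearCombination_apply,
        Finsupp.sum_fintype _ _ (by simp), vecMul_eq_sum]
      rfl
    have hμS' : support μ ⊆ S := by rwa [Finsupp.fun_support_eq, ← Finsupp.mem_supported ℝ]
    simpa [h u μ hu.1 (by simpa using hu₀) hμS' hμA] using hu.2
  obtain ⟨f, hfL, hfK⟩ := geometric_hahn_banach_compact_submodule
    (hΔconv.linear_image _) (hΔcomp.image A.vecMulLinear.continuous_of_finiteDimensional)
    L (Submodule.closed_of_finiteDimensional L) hdisj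
  obtain ⟨w, hw⟩ := (dotProductEquiv ℝ κ).surjective f.toLinearMap
  have hfw : ∀ y, f y = w ⬝ᵥ y := fun y => (LinearMap.congr_fun hw y).symm
  have hAw : ∀ i, (A *ᵥ -w) i = -f (A.row i) := fun i => by
    rw [mulVec_neg, Pi.neg_apply, hfw, dotProduct_comm]
    rfl
  refine ⟨-w, fun i hi => ?_, fun i hi => ?_⟩
  · rw [hAw, hfL _ (Submodule.subset_span (mem_image_of_mem _ hi)), neg_zero]
  · have hsingle : Pi.single i 1 ∈ Δ := by
      refine ⟨single_mem_stdSimplex ℝ i, mem_iInter₂.2 fun j hj => ?_⟩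
      simp [ne_of_mem_of_not_mem hj hi]
    rw [hAw, neg_pos, ← single_one_vecMul]
    exact hfK _ ⟨_, hsingle, rfl⟩

theorem mem_closure_range_exp_neg_mulVec [Fintype κ] (A : Matrix ι κ ℝ) {z : ι → ℝ}
    {x w : κ → ℝ} (hx : ∀ i, z i ≠ 0 → exp (-(A *ᵥ x) i) = z i)
    (hw₀ : ∀ i, z i ≠ 0 → (A *ᵥ w) i = 0)
    (hw : ∀ i, z i = 0 → 0 < (A *ᵥ w) i) :
    z ∈ closure (range fun v i => exp (-(A *ᵥ v) i)) := by
  refine mem_closure_of_tendsto (f := fun t : ℝ => fun i => exp (-(A *ᵥ (x + t • w)) i))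
    (b := atTop) (tendsto_pi_nhds.2 fun i => ?_) (Eventually.of_forall fun t => mem_range_self _)
  simp only [mulVec_add, mulVec_smul, Pi.add_apply, Pi.smul_apply, smul_eq_mul]
  by_cases hi : z i = 0
  · rw [hi]
    exact tendsto_exp_atBot.comp (tendsto_neg_atTop_atBot.comp
      (tendsto_atTop_add_const_left _ _ (tendsto_id.atTop_mul_const (hw i hi))))
  · simp only [hw₀ i hi, mul_zero, add_zero, hx i hi, tendsto_const_nhds]

end

section

variable {m n : ℕ}

theorem toricX_eq_closure_range (A : Matrix (Fin m) (Fin n) ℝ) :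
    toricX A = closure (range fun v i => exp (-(A *ᵥ v) i)) :=
  rfl

theorem prod_rpow_eq_of_mem_binomialZ {A : Matrix (Fin m) (Fin n) ℝ} {z : Fin m → ℝ}
    (hz : z ∈ binomialZ A) {u v : Fin m → ℝ} (hu : 0 ≤ u) (hv : 0 ≤ v) (h : u ᵥ* A = v ᵥ* A) :
    ∏ i, z i ^ u i = ∏ i, z i ^ v i :=
  hz.2 u v hu hv (by simpa only [vecMul_eq_sum] using h)

theorem isClosed_binomialZ (A : Matrix (Fin m) (Fin n) ℝ) : IsClosed (binomialZ A) := by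
  have hprod : ∀ u : Fin m → ℝ, (∀ i, 0 ≤ u i) →
      Continuous fun z : Fin m → ℝ => ∏ i, z i ^ u i := fun u hu =>
    continuous_finsetProd _ fun i _ => (continuous_apply i).rpow_const fun _ => .inr (hu i)
  simp only [binomialZ, ofPred_and, ofPred_forall]
  exact (isClosed_iInter fun i => isClosed_le continuous_const (continuous_apply i)).inter
    (isClosed_iInter fun u => isClosed_iInter fun v => isClosed_iInter fun hu =>
      isClosed_iInter fun hv => isClosed_iInter fun _ => isClosed_eq (hprod u hu) (hprod v hv))

theorem toricX_subset_binomialZ (A : Matrix (Fin m) (Fin n) ℝ) : toricX A ⊆ binomialZ A := by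
  rw [toricX_eq_closure_range]
  refine closure_minimal ?_ (isClosed_binomialZ A)
  rintro _ ⟨v, rfl⟩
  refine ⟨fun i => (exp_pos _).le, fun u u' _ _ h => ?_⟩
  simp only [← vecMul_eq_sum] at h
  rw [prod_exp_neg_mulVec_rpow, prod_exp_neg_mulVec_rpow, h]

theorem dotProduct_log_eq_zero_of_mem_binomialZ {A : Matrix (Fin m) (Fin n) ℝ} {z : Fin m → ℝ}
    (hz : z ∈ binomialZ A) {u : Fin m → ℝ} (hu : support u ⊆ support z) (huA : u ᵥ* A = 0) :
    u ⬝ᵥ (fun i => log (z i)) = 0 := by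
  have h := prod_rpow_eq_of_mem_binomialZ hz (posPart_nonneg u) (negPart_nonneg u)
    (by rw [← sub_eq_zero, ← sub_vecMul, posPart_sub_negPart, huA])
  rw [prod_rpow_eq_exp_dotProduct_log hz.1 ((support_posPart_subset u).trans hu),
    prod_rpow_eq_exp_dotProduct_log hz.1 ((support_negPart_subset u).trans hu), exp_eq_exp] at h
  rw [← posPart_sub_negPart u, sub_dotProduct, h, sub_self]

theorem eq_zero_of_mem_binomialZ_of_vecMul_eq {A : Matrix (Fin m) (Fin n) ℝ} {z : Fin m → ℝ}
    (hz : z ∈ binomialZ A) {u μ : Fin m → ℝ} (hu : 0 ≤ u) (hu₀ : ∀ i ∈ support z, u i = 0)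
    (hμ : support μ ⊆ support z) (h : u ᵥ* A = μ ᵥ* A) : u = 0 := by
  by_contra hne
  obtain ⟨j, hj⟩ := Function.ne_iff.1 hne
  have hzj : z j = 0 := by_contra fun hzj => hj (hu₀ j hzj)
  have hprod := prod_rpow_eq_of_mem_binomialZ hz (add_nonneg hu (negPart_nonneg μ))
    (posPart_nonneg μ) (by
      rw [add_vecMul, h, ← add_vecMul, ← sub_eq_iff_eq_add.1 (posPart_sub_negPart μ)])
  rw [prod_rpow_eq_exp_dotProduct_log hz.1 ((support_posPart_subset μ).trans hμ),
    Finset.prod_eq_zero (Finset.mem_univ j)] at hprod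
  · exact (exp_pos _).ne hprod
  · rw [hzj, zero_rpow]
    exact (add_pos_of_pos_of_nonneg ((hu j).lt_of_ne' hj) (negPart_nonneg μ j)).ne'

theorem binomialZ_subset_toricX (A : Matrix (Fin m) (Fin n) ℝ) : binomialZ A ⊆ toricX A := by
  intro z hz
  obtain ⟨x, hx⟩ := exists_mulVec_eq_on_of_forall_vecMul_eq_zero A (support z)
    (-fun i => log (z i)) fun u hu huA => by
      rw [dotProduct_neg, dotProduct_log_eq_zero_of_mem_binomialZ hz hu huA, neg_zero]
  obtain ⟨w, hw₀, hw⟩ := exists_mulVec_eq_zero_on_pos_off A (support z)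
    fun u μ hu hu₀ hμ h => eq_zero_of_mem_binomialZ_of_vecMul_eq hz hu hu₀ hμ h
  rw [toricX_eq_closure_range]
  refine mem_closure_range_exp_neg_mulVec A (x := x) (fun i hi => ?_) hw₀
    fun i hi => hw i (notMem_support.2 hi)
  rw [hx i hi, Pi.neg_apply, neg_neg, exp_log ((hz.1 i).lt_of_ne' hi)]

end

/-- For a finite `𝒜 ⊆ M`, the irrational affine toric variety `X_𝒜` equals the binomial
variety `𝒵_𝒜`. -/
theorem toricX_eq_binomialZ {n m : ℕ} (A : Fin m → (Fin n → ℝ)) :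
    toricX A = binomialZ A :=
  (toricX_subset_binomialZ A).antisymm (binomialZ_subset_toricX A)
end
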